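/- arXiv:0902.2514 — 9 statements merged into one kernel-verified Lean document; each statement's English description precedes it below -/
import Mathlib

section
/- For every real number s with 0 < s < 1 and every real number x > 0, the double inequality (x/(x+s))^{1-s} ≤ Γ(x+s)/(x^s · Γ(x)) ≤ 1 holds, where Γ denotes Euler's gamma function. -/
/-!
Both bounds come from the log-convexity of `Γ` on `(0, ∞)` between the points `y` and `y + 1`,
where `Γ (y + 1) = y Γ y`: for `0 < t < 1` it gives `Γ (y + t) ≤ y ^ t Γ y`. Taking `y = x, t = s`
is the upper bound; taking `y = x + s, t = 1 - s` gives `x Γ x ≤ (x + s) ^ (1 - s) Γ (x + s)`,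
which is the lower bound after dividing by `x ^ (1 - s) x ^ s Γ x`.
-/

open Real

theorem Real.Gamma_add_le_rpow_mul_Gamma {x t : ℝ} (hx : 0 < x) (ht0 : 0 < t) (ht1 : t < 1) :
    Gamma (x + t) ≤ x ^ t * Gamma x := by
  have hGx : 0 < Gamma x := Gamma_pos_of_pos hx
  calc Gamma (x + t) = Gamma ((1 - t) * x + t * (x + 1)) := by ring_nf
    _ ≤ Gamma x ^ (1 - t) * Gamma (x + 1) ^ t :=
      Gamma_mul_add_mul_le_rpow_Gamma_mul_rpow_Gamma hx (by linarith) (by linarith) ht0 (by ring)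
    _ = x ^ t * Gamma x := by
      rw [Gamma_add_one hx.ne', mul_rpow hx.le hGx.le, mul_left_comm, ← rpow_add hGx,
        sub_add_cancel, rpow_one]

theorem Real.mul_Gamma_le_rpow_mul_Gamma_add {x s : ℝ} (hx : 0 < x) (hs0 : 0 < s) (hs1 : s < 1) :
    x * Gamma x ≤ (x + s) ^ (1 - s) * Gamma (x + s) := by
  have h := Gamma_add_le_rpow_mul_Gamma (x := x + s) (t := 1 - s) (by linarith) (by linarith)
    (by linarith)
  rwa [add_add_sub_cancel, Gamma_add_one hx.ne'] at h

theorem wendel_double_inequality (s x : ℝ) (hs0 : 0 < s) (hs1 : s < 1) (hx : 0 < x) :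
    (x / (x + s)) ^ (1 - s) ≤ Gamma (x + s) / (x ^ s * Gamma x) ∧
      Gamma (x + s) / (x ^ s * Gamma x) ≤ 1 := by
  have hxs : 0 < x + s := by linarith
  have hden : 0 < x ^ s * Gamma x := mul_pos (rpow_pos_of_pos hx s) (Gamma_pos_of_pos hx)
  constructor
  · have hsplit : x ^ (1 - s) * (x ^ s * Gamma x) = x * Gamma x := by
      rw [← mul_assoc, ← rpow_add hx, sub_add_cancel, rpow_one]
    rw [div_rpow hx.le hxs.le, div_le_div_iff₀ (rpow_pos_of_pos hxs _) hden, hsplit,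
      mul_comm (Gamma (x + s))]
    exact mul_Gamma_le_rpow_mul_Gamma_add hx hs0 hs1
  · rw [div_le_one hden]
    exact Gamma_add_le_rpow_mul_Gamma hx hs0 hs1
end

section
/- For all real numbers a and b, the limit lim_{x→∞} x^{b-a} · Γ(x+a)/Γ(x+b) = 1 holds (the limit taken as the real variable x tends to +∞), where Γ denotes Euler's gamma function. -/
/-!
Log-convexity of `Γ` (Hölder's inequality) gives Gautschi's inequality
`x Γ(x) ≤ (x + s)^(1-s) Γ(x + s)` and `Γ(x + s) ≤ x^s Γ(x)` for `0 < s < 1`, which squeezes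
`x^(-s) Γ(x + s) / Γ(x)` to `1`. The recurrence `Γ(y + 1) = y Γ(y)` moves this limit from the
fractional part of any real `c` to `c` itself, and the theorem is the quotient of the limits for
`c = a` and `c = b`.
-/

open Real Filter Topology

lemma tendsto_add_div_self_atTop (c : ℝ) : Tendsto (fun x : ℝ => (x + c) / x) atTop (𝓝 1) := by
  have h : Tendsto (fun x : ℝ => 1 + c / x) atTop (𝓝 (1 + 0)) :=
    tendsto_const_nhds.add (tendsto_const_nhds.div_atTop tendsto_id)
  rw [add_zero] at h
  refine h.congr' ?_
  filter_upwards [eventually_gt_atTop 0] with x hx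
  field_simp

lemma tendsto_self_div_add_atTop (c : ℝ) : Tendsto (fun x : ℝ => x / (x + c)) atTop (𝓝 1) := by
  simpa [inv_div] using (tendsto_add_div_self_atTop c).inv₀ one_ne_zero

namespace Real

lemma Gamma_add_le_rpow_mul_Gamma_s1 {s x : ℝ} (hs₀ : 0 < s) (hs₁ : s < 1) (hx : 0 < x) :
    Gamma (x + s) ≤ x ^ s * Gamma x := by
  have hΓ := Gamma_pos_of_pos hx
  have h := Gamma_mul_add_mul_le_rpow_Gamma_mul_rpow_Gamma hx (by linarith : 0 < x + 1)
    (by linarith : 0 < 1 - s) hs₀ (by ring)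
  rw [Gamma_add_one hx.ne', show (1 - s) * x + s * (x + 1) = x + s by ring] at h
  calc Gamma (x + s) ≤ Gamma x ^ (1 - s) * (x * Gamma x) ^ s := h
    _ = x ^ s * (Gamma x ^ (1 - s) * Gamma x ^ s) := by rw [mul_rpow hx.le hΓ.le]; ring
    _ = x ^ s * Gamma x := by rw [← rpow_add hΓ, sub_add_cancel, rpow_one]

lemma mul_Gamma_le_rpow_mul_Gamma_add_s1 {s x : ℝ} (hs₀ : 0 < s) (hs₁ : s < 1) (hx : 0 < x) :
    x * Gamma x ≤ (x + s) ^ (1 - s) * Gamma (x + s) := by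
  -- the upper bound at the point `x + s` with exponent `1 - s`, as `x Γ(x) = Γ((x + s) + (1 - s))`
  have h := Gamma_add_le_rpow_mul_Gamma_s1 (by linarith : 0 < 1 - s) (by linarith)
    (by linarith : 0 < x + s)
  rwa [add_add_sub_cancel, Gamma_add_one hx.ne'] at h

noncomputable def gammaRatio (c x : ℝ) : ℝ := x ^ (-c) * Gamma (x + c) / Gamma x

lemma tendsto_gammaRatio_of_mem_Ioo {s : ℝ} (hs₀ : 0 < s) (hs₁ : s < 1) :
    Tendsto (gammaRatio s) atTop (𝓝 1) := by
  have hlow : Tendsto (fun x : ℝ => (x / (x + s)) ^ (1 - s)) atTop (𝓝 1) := by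
    simpa using (tendsto_self_div_add_atTop s).rpow_const (p := 1 - s) (Or.inl one_ne_zero)
  refine tendsto_of_tendsto_of_tendsto_of_le_of_le' hlow tendsto_const_nhds ?_ ?_
  · filter_upwards [eventually_gt_atTop 0] with x hx
    have hxs : 0 < x + s := by linarith
    rw [gammaRatio, div_rpow hx.le hxs.le, div_le_div_iff₀ (rpow_pos_of_pos hxs _)
      (Gamma_pos_of_pos hx)]
    calc x ^ (1 - s) * Gamma x = x ^ (-s) * (x * Gamma x) := by
          rw [show 1 - s = -s + 1 by ring, rpow_add hx, rpow_one]; ring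
      _ ≤ x ^ (-s) * ((x + s) ^ (1 - s) * Gamma (x + s)) :=
          mul_le_mul_of_nonneg_left (mul_Gamma_le_rpow_mul_Gamma_add_s1 hs₀ hs₁ hx)
            (rpow_nonneg hx.le _)
      _ = x ^ (-s) * Gamma (x + s) * (x + s) ^ (1 - s) := by ring
  · filter_upwards [eventually_gt_atTop 0] with x hx
    rw [gammaRatio, div_le_one (Gamma_pos_of_pos hx)]
    calc x ^ (-s) * Gamma (x + s) ≤ x ^ (-s) * (x ^ s * Gamma x) :=
          mul_le_mul_of_nonneg_left (Gamma_add_le_rpow_mul_Gamma_s1 hs₀ hs₁ hx) (rpow_nonneg hx.le _)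
      _ = Gamma x := by rw [← mul_assoc, ← rpow_add hx, neg_add_cancel, rpow_zero, one_mul]

lemma tendsto_gammaRatio_of_mem_Ico {s : ℝ} (hs₀ : 0 ≤ s) (hs₁ : s < 1) :
    Tendsto (gammaRatio s) atTop (𝓝 1) := by
  rcases hs₀.eq_or_lt with rfl | hs₀
  · refine tendsto_const_nhds.congr' ?_
    filter_upwards [eventually_gt_atTop 0] with x hx
    simp [gammaRatio, (Gamma_pos_of_pos hx).ne']
  · exact tendsto_gammaRatio_of_mem_Ioo hs₀ hs₁

lemma gammaRatio_add_one_eventuallyEq (c : ℝ) :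
    gammaRatio (c + 1) =ᶠ[atTop] fun x => gammaRatio c x * ((x + c) / x) := by
  filter_upwards [eventually_gt_atTop 0, eventually_gt_atTop (-c)] with x hx hxc
  rw [gammaRatio, gammaRatio, ← add_assoc, Gamma_add_one (by linarith : x + c ≠ 0), neg_add,
    rpow_add hx, rpow_neg_one]
  field_simp

lemma tendsto_gammaRatio_add_one_iff (c : ℝ) :
    Tendsto (gammaRatio (c + 1)) atTop (𝓝 1) ↔ Tendsto (gammaRatio c) atTop (𝓝 1) := by
  have hr := tendsto_add_div_self_atTop c
  rw [tendsto_congr' (gammaRatio_add_one_eventuallyEq c)]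
  refine ⟨fun h => ?_, fun h => by simpa using h.mul hr⟩
  have hq := h.div hr one_ne_zero
  rw [div_one] at hq
  refine hq.congr' ?_
  filter_upwards [eventually_gt_atTop 0, eventually_gt_atTop (-c)] with x hx hxc
  rw [Pi.div_apply, mul_div_cancel_right₀ _ (div_pos (by linarith) hx).ne']

lemma tendsto_gammaRatio_add_int_iff (c : ℝ) (n : ℤ) :
    Tendsto (gammaRatio (c + n)) atTop (𝓝 1) ↔ Tendsto (gammaRatio c) atTop (𝓝 1) := by
  induction n using Int.induction_on with
  | zero => simp
  | succ n ih => rw [Int.cast_add, Int.cast_one, ← add_assoc, tendsto_gammaRatio_add_one_iff, ih]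
  | pred n ih =>
    rw [← ih, ← tendsto_gammaRatio_add_one_iff,
      show c + ((-n - 1 : ℤ) : ℝ) + 1 = c + ((-n : ℤ) : ℝ) by push_cast; ring]

lemma tendsto_gammaRatio (c : ℝ) : Tendsto (gammaRatio c) atTop (𝓝 1) := by
  rw [← Int.fract_add_floor c, tendsto_gammaRatio_add_int_iff]
  exact tendsto_gammaRatio_of_mem_Ico (Int.fract_nonneg c) (Int.fract_lt_one c)

end Real

theorem wendel_limit (a b : ℝ) :
    Tendsto (fun x : ℝ => x ^ (b - a) * Gamma (x + a) / Gamma (x + b)) atTop (nhds 1) := by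
  have h := (tendsto_gammaRatio a).div (tendsto_gammaRatio b) one_ne_zero
  rw [div_one] at h
  refine h.congr' ?_
  filter_upwards [eventually_gt_atTop 0, eventually_gt_atTop (-b)] with x hx hxb
  have hΓ := (Gamma_pos_of_pos hx).ne'
  have hΓb := (Gamma_pos_of_pos (by linarith : 0 < x + b)).ne'
  have hxa := (rpow_pos_of_pos hx a).ne'
  have hxb := (rpow_pos_of_pos hx b).ne'
  simp only [Pi.div_apply, gammaRatio, rpow_neg hx.le, rpow_sub hx]
  field_simp
end

section
/- For every positive integer n, the inequality (Γ((n+1)/2)/Γ(n/2))² < n²/(2n+1) holds, where Γ denotes Euler's gamma function. -/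
/-!
Put `f(x) = (Γ(x + 1/2) / Γ(x))² (x + 1/4) / x²`, so that the claim is `f(n/2) < 1`. The functional
equation gives `f(x) / f(x + 1) = (x + 1/4)(x + 1)² / ((x + 5/4)(x + 1/2)²)`, whose numerator and
denominator differ only in the constant terms `1/4 < 5/16`; hence `f` strictly increases along
`x, x + 1, x + 2, …`. Log-convexity of `Γ` gives `Γ(x + 1/2)² ≤ Γ(x) Γ(x + 1)`, i.e.
`f(x) ≤ 1 + 1/(4x)`, so the increasing sequence `f(x + 1 + k)` is bounded by `1` in the limit, and
`f(x) < f(x + 1) ≤ 1`.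
-/

open Real Filter Topology

namespace Real

theorem Gamma_midpoint_sq_le_mul {s t : ℝ} (hs : 0 < s) (ht : 0 < t) :
    Gamma ((s + t) / 2) ^ 2 ≤ Gamma s * Gamma t := by
  have h := Gamma_mul_add_mul_le_rpow_Gamma_mul_rpow_Gamma hs ht one_half_pos one_half_pos
    (add_halves 1)
  rw [← sqrt_eq_rpow, ← sqrt_eq_rpow, ← sqrt_mul (Gamma_pos_of_pos hs).le,
    ← mul_add, one_div_mul_eq_div] at h
  calc Gamma ((s + t) / 2) ^ 2 ≤ √(Gamma s * Gamma t) ^ 2 :=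
        pow_le_pow_left₀ (Gamma_nonneg_of_nonneg (by positivity)) h 2
    _ = Gamma s * Gamma t :=
        sq_sqrt (mul_nonneg (Gamma_pos_of_pos hs).le (Gamma_pos_of_pos ht).le)

theorem Gamma_add_half_sq_le {x : ℝ} (hx : 0 < x) : Gamma (x + 1 / 2) ^ 2 ≤ x * Gamma x ^ 2 := by
  have h := Gamma_midpoint_sq_le_mul hx (by linarith : 0 < x + 1)
  rwa [Gamma_add_one hx.ne', show (x + (x + 1)) / 2 = x + 1 / 2 by ring, ← mul_assoc,
    mul_comm _ x, mul_assoc, ← sq] at h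

end Real

noncomputable def gurlandRatio (x : ℝ) : ℝ :=
  (Gamma (x + 1 / 2) / Gamma x) ^ 2 * (x + 1 / 4) / x ^ 2

theorem gurlandRatio_lt_add_one {x : ℝ} (hx : 0 < x) : gurlandRatio x < gurlandRatio (x + 1) := by
  have hG := Gamma_pos_of_pos hx
  have hH := Gamma_pos_of_pos (by linarith : 0 < x + 1 / 2)
  have hcubic : (x + 1 / 4) * (x + 1) ^ 2 < (x + 5 / 4) * (x + 1 / 2) ^ 2 := by nlinarith
  rw [gurlandRatio, gurlandRatio, add_right_comm, Gamma_add_one hx.ne',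
    Gamma_add_one (by positivity : x + 1 / 2 ≠ 0), div_lt_div_iff₀ (by positivity) (by positivity)]
  field_simp
  nlinarith [mul_lt_mul_of_pos_left hcubic (by positivity : 0 < (Gamma (x + 1 / 2)) ^ 2 * x ^ 2)]

theorem gurlandRatio_le_one_add {x : ℝ} (hx : 0 < x) : gurlandRatio x ≤ 1 + 1 / (4 * x) := by
  have hG := Gamma_pos_of_pos hx
  calc gurlandRatio x ≤ x * Gamma x ^ 2 / Gamma x ^ 2 * (x + 1 / 4) / x ^ 2 := by
        rw [gurlandRatio, div_pow]
        gcongr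
        exact Gamma_add_half_sq_le hx
    _ = 1 + 1 / (4 * x) := by field_simp

theorem gurlandRatio_le_add_nat {x : ℝ} (hx : 0 < x) (k : ℕ) :
    gurlandRatio x ≤ gurlandRatio (x + k) := by
  induction k with
  | zero => simp
  | succ k ih =>
    push_cast
    rw [← add_assoc]
    exact ih.trans (gurlandRatio_lt_add_one (by positivity)).le

theorem gurlandRatio_lt_one {x : ℝ} (hx : 0 < x) : gurlandRatio x < 1 := by
  have hlim : Tendsto (fun k : ℕ => 1 + 1 / (4 * (x + 1 + k))) atTop (𝓝 1) := by
    have h := (tendsto_atTop_add_const_left _ (x + 1) tendsto_natCast_atTop_atTop).const_mul_atTop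
      four_pos
    simpa using tendsto_const_nhds.add (tendsto_const_nhds (x := (1 : ℝ)).div_atTop h)
  exact (gurlandRatio_lt_add_one hx).trans_le (ge_of_tendsto' hlim fun k =>
    (gurlandRatio_le_add_nat (by positivity) k).trans (gurlandRatio_le_one_add (by positivity)))

theorem gurland_inequality (n : ℕ) (hn : 0 < n) :
    (Gamma ((n + 1) / 2) / Gamma (n / 2)) ^ 2 < (n : ℝ) ^ 2 / (2 * n + 1) := by
  have h := gurlandRatio_lt_one (x := n / 2) (by positivity)
  rw [gurlandRatio, div_lt_one (by positivity), ← add_div] at h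
  rw [lt_div_iff₀ (by positivity)]
  linarith
end

section
/- For every positive integer n, the double inequality 1/√(π(n+1/2)) < (2n-1)!!/(2n)!! < 1/√(π(n+1/4)) holds. -/
/-!
Write `W n` for the `n`-th partial Wallis product. Then `(2n-1)!!/(2n)!! = 1/√(W n (2n+1))`, so
the claim is `π(n+1/4) < W n (2n+1) < π(n+1/2)`. The upper bound is `W n < π/2`, true since `W`
increases to `π/2`. The lower bound says that `W n (2n+1)/(4n+1)` exceeds `π/4`; this sequence
decreases, and it tends to `π/4` because `W n → π/2`.
-/

open Real Real.Wallis Filter Topology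

namespace Real.Wallis

theorem W_lt_W_succ (k : ℕ) : W k < W (k + 1) := by
  have hfactor : (1 : ℝ) < (2 * k + 2) / (2 * k + 1) * ((2 * k + 2) / (2 * k + 3)) := by
    rw [div_mul_div_comm, one_lt_div (by positivity)]
    nlinarith
  rw [W_succ]
  exact lt_mul_of_one_lt_right (W_pos k) hfactor

theorem W_lt_pi_div_two (k : ℕ) : W k < π / 2 :=
  (W_lt_W_succ k).trans_le (W_le (k + 1))

theorem W_mul_eq_inv_sq_doubleFactorial_ratio (n : ℕ) :
    W n * (2 * n + 1) =
      (((2 * n).factorial : ℝ) / ((2 : ℝ) ^ n * n.factorial) / ((2 : ℝ) ^ n * n.factorial))⁻¹ ^ 2 := by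
  rw [W_eq_factorial_ratio]
  field_simp
  ring

theorem doubleFactorial_ratio_eq_one_div_sqrt (n : ℕ) :
    ((2 * n).factorial : ℝ) / ((2 : ℝ) ^ n * n.factorial) / ((2 : ℝ) ^ n * n.factorial) =
      1 / √(W n * (2 * n + 1)) := by
  rw [W_mul_eq_inv_sq_doubleFactorial_ratio, sqrt_sq (by positivity), one_div, inv_inv]

noncomputable def kazarinoffSeq (k : ℕ) : ℝ := W k * ((1 + 2 * k) / (1 + 4 * k))

theorem kazarinoffSeq_succ_lt (k : ℕ) : kazarinoffSeq (k + 1) < kazarinoffSeq k := by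
  unfold kazarinoffSeq
  rw [W_succ, mul_assoc, mul_lt_mul_iff_right₀ (W_pos k)]
  push_cast
  rw [div_mul_div_comm, div_mul_div_comm, div_lt_div_iff₀ (by positivity) (by positivity)]
  nlinarith [sq_nonneg (k : ℝ)]

theorem tendsto_kazarinoffSeq : Tendsto kazarinoffSeq atTop (𝓝 (π / 4)) := by
  have hlimit : π / 4 = π / 2 * (2 / 4) := by ring
  rw [hlimit]
  exact tendsto_W_nhds_pi_div_two.mul (tendsto_add_mul_div_add_mul_atTop_nhds 1 1 2 four_ne_zero)

theorem pi_div_four_lt_kazarinoffSeq (k : ℕ) : π / 4 < kazarinoffSeq k :=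
  ((strictAnti_nat_of_succ_lt kazarinoffSeq_succ_lt).antitone.le_of_tendsto
    tendsto_kazarinoffSeq (k + 1)).trans_lt (kazarinoffSeq_succ_lt k)

end Real.Wallis

theorem kazarinoff_wallis_inequality_general (n : ℕ) :
    1 / Real.sqrt (π * (n + 1 / 2)) <
        (((2 * n).factorial : ℝ) / ((2 : ℝ) ^ n * n.factorial)) / ((2 : ℝ) ^ n * n.factorial) ∧
      (((2 * n).factorial : ℝ) / ((2 : ℝ) ^ n * n.factorial)) / ((2 : ℝ) ^ n * n.factorial) <
        1 / Real.sqrt (π * (n + 1 / 4)) := by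
  have hW := W_pos n
  have hW_lt : W n * (2 * n + 1) < π * (n + 1 / 2) := by
    nlinarith [W_lt_pi_div_two n]
  have hlt_W : π * (n + 1 / 4) < W n * (2 * n + 1) := by
    have h := pi_div_four_lt_kazarinoffSeq n
    rw [kazarinoffSeq, mul_div_assoc', lt_div_iff₀ (by positivity)] at h
    linarith
  rw [doubleFactorial_ratio_eq_one_div_sqrt]
  exact ⟨one_div_lt_one_div_of_lt (by positivity) (sqrt_lt_sqrt (by positivity) hW_lt),
    one_div_lt_one_div_of_lt (by positivity) (sqrt_lt_sqrt (by positivity) hlt_W)⟩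

/-- For a positive integer `n`, with `(2n)!! = 2^n · n!` and `(2n-1)!! = (2n)!/(2^n · n!)`,
the Kazarinoff refinement of Wallis' inequality:
`1/√(π(n+1/2)) < (2n-1)!!/(2n)!! < 1/√(π(n+1/4))`. -/
theorem kazarinoff_wallis_inequality (n : ℕ) (hn : 0 < n) :
    1 / Real.sqrt (π * (n + 1 / 2)) <
        (((2 * n).factorial : ℝ) / ((2 : ℝ) ^ n * n.factorial)) / ((2 : ℝ) ^ n * n.factorial) ∧
      (((2 * n).factorial : ℝ) / ((2 : ℝ) ^ n * n.factorial)) / ((2 : ℝ) ^ n * n.factorial) <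
        1 / Real.sqrt (π * (n + 1 / 4)) :=
  kazarinoff_wallis_inequality_general n
end

section
/- For every real number t > -1/2, the inequality Γ((t+1)/2)/Γ((t+2)/2) < 2/√(2t+1) holds, where Γ denotes Euler's gamma function. -/
/-!
Put `s = (t + 1) / 2`; the claim is `(s - 1/4) Γ(s)² < Γ(s + 1/2)²` for `s > 1/4`, i.e. that
`g(s) = Γ(s + 1/2)² / ((s - 1/4) Γ(s)²)` exceeds `1`. The functional equation shows that `g` strictly
decreases under `s ↦ s + 1`, while log-convexity of `Γ` at the midpoint of `s + 1/2` and `s + 3/2`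
gives `g(s) ≥ s² / ((s + 1/2)(s - 1/4))`, which tends to `1`. So `g(s) ≥ g(s + n) ≥ 1 - o(1)`, and
`g(s) > g(s + 1) ≥ 1`.
-/

open Real Filter Topology

namespace Real

theorem Gamma_sq_le_Gamma_sub_mul_Gamma_add {x h : ℝ} (hsub : 0 < x - h) (hadd : 0 < x + h) :
    Gamma x ^ 2 ≤ Gamma (x - h) * Gamma (x + h) := by
  have hmid := Gamma_mul_add_mul_le_rpow_Gamma_mul_rpow_Gamma hsub hadd
    (by norm_num : (0 : ℝ) < 1 / 2) (by norm_num : (0 : ℝ) < 1 / 2) (by norm_num)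
  rw [show 1 / 2 * (x - h) + 1 / 2 * (x + h) = x by ring, ← mul_rpow (Gamma_pos_of_pos hsub).le
    (Gamma_pos_of_pos hadd).le, ← sqrt_eq_rpow] at hmid
  calc Gamma x ^ 2 ≤ √(Gamma (x - h) * Gamma (x + h)) ^ 2 := by
        gcongr
        exact (Gamma_pos_of_pos (by linarith)).le
    _ = Gamma (x - h) * Gamma (x + h) :=
        sq_sqrt (mul_pos (Gamma_pos_of_pos hsub) (Gamma_pos_of_pos hadd)).le

theorem sq_mul_Gamma_sq_le {x : ℝ} (hx : 0 < x) :
    x ^ 2 * Gamma x ^ 2 ≤ (x + 1 / 2) * Gamma (x + 1 / 2) ^ 2 := by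
  have h := Gamma_sq_le_Gamma_sub_mul_Gamma_add (x := x + 1) (h := 1 / 2) (by linarith) (by linarith)
  rw [show x + 1 + 1 / 2 = x + 1 / 2 + 1 by ring, Gamma_add_one hx.ne',
    Gamma_add_one (by linarith : x + 1 / 2 ≠ 0), show x + 1 - 1 / 2 = x + 1 / 2 by ring] at h
  linarith

end Real

theorem tendsto_sq_div_add_mul_add_atTop (a b : ℝ) :
    Tendsto (fun y : ℝ => y ^ 2 / ((y + a) * (y + b))) atTop (𝓝 1) := by
  have hinv : Tendsto (fun y : ℝ => ((1 + a * y⁻¹) * (1 + b * y⁻¹))⁻¹) atTop (𝓝 1) := by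
    have h := ((tendsto_inv_atTop_zero.const_mul a).const_add 1).mul
      ((tendsto_inv_atTop_zero.const_mul b).const_add 1) |>.inv₀ (by norm_num)
    simpa using h
  refine hinv.congr' ?_
  filter_upwards [eventually_ne_atTop 0] with y hy
  field_simp

noncomputable def kazarinoffQuotient (x : ℝ) : ℝ :=
  Gamma (x + 1 / 2) ^ 2 / ((x - 1 / 4) * Gamma x ^ 2)

section kazarinoffQuotient

variable {x : ℝ}

theorem kazarinoffQuotient_add_one_lt (hx : 1 / 4 < x) :
    kazarinoffQuotient (x + 1) < kazarinoffQuotient x := by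
  have hx0 : 0 < x := by linarith
  have hG := Gamma_pos_of_pos hx0
  have hG' := Gamma_pos_of_pos (by linarith : 0 < x + 1 / 2)
  rw [kazarinoffQuotient, kazarinoffQuotient, show x + 1 + 1 / 2 = x + 1 / 2 + 1 by ring,
    Gamma_add_one hx0.ne', Gamma_add_one (by linarith : x + 1 / 2 ≠ 0),
    div_lt_div_iff₀ (mul_pos (by linarith) (pow_pos (mul_pos hx0 hG) 2))
      (mul_pos (by linarith) (by positivity))]
  -- after cancelling the Gamma factors this is `(x + 1/2)² (x - 1/4) < x² (x + 3/4)`,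
  -- whose two sides differ by exactly `1/16`
  have hpoly : (x + 1 / 2) ^ 2 * (x - 1 / 4) < x ^ 2 * (x + 1 - 1 / 4) := by nlinarith
  have hprod : 0 < Gamma x ^ 2 * Gamma (x + 1 / 2) ^ 2 := by positivity
  nlinarith [mul_lt_mul_of_pos_right hpoly hprod]

theorem div_le_kazarinoffQuotient (hx : 1 / 4 < x) :
    x ^ 2 / ((x + 1 / 2) * (x - 1 / 4)) ≤ kazarinoffQuotient x := by
  have hx0 : 0 < x := by linarith
  have hG := Gamma_pos_of_pos hx0
  rw [kazarinoffQuotient, div_le_div_iff₀ (mul_pos (by linarith) (by linarith))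
    (mul_pos (by linarith) (by positivity))]
  nlinarith [mul_le_mul_of_nonneg_right (sq_mul_Gamma_sq_le hx0) (by linarith : 0 ≤ x - 1 / 4)]

theorem kazarinoffQuotient_add_nat_le (hx : 1 / 4 < x) (n : ℕ) :
    kazarinoffQuotient (x + n) ≤ kazarinoffQuotient x := by
  induction n with
  | zero => simp
  | succ n ih =>
    have hxn : 1 / 4 < x + n := by linarith [n.cast_nonneg (α := ℝ)]
    rw [Nat.cast_succ, ← add_assoc]
    exact (kazarinoffQuotient_add_one_lt hxn).le.trans ih

theorem one_le_kazarinoffQuotient (hx : 1 / 4 < x) : 1 ≤ kazarinoffQuotient x := by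
  have hlim : Tendsto (fun n : ℕ => (x + n) ^ 2 / ((x + n + 1 / 2) * (x + n + -(1 / 4))))
      atTop (𝓝 1) :=
    (tendsto_sq_div_add_mul_add_atTop _ _).comp
      (tendsto_atTop_add_const_left _ _ tendsto_natCast_atTop_atTop)
  refine le_of_tendsto hlim (Eventually.of_forall fun n => ?_)
  have hxn : 1 / 4 < x + n := by linarith [n.cast_nonneg (α := ℝ)]
  simpa only [← sub_eq_add_neg] using
    (div_le_kazarinoffQuotient hxn).trans (kazarinoffQuotient_add_nat_le hx n)

theorem one_lt_kazarinoffQuotient (hx : 1 / 4 < x) : 1 < kazarinoffQuotient x :=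
  (one_le_kazarinoffQuotient (by linarith)).trans_lt (kazarinoffQuotient_add_one_lt hx)

theorem sqrt_sub_quarter_mul_Gamma_lt (hx : 1 / 4 < x) : √(x - 1 / 4) * Gamma x < Gamma (x + 1 / 2) := by
  have hG := Gamma_pos_of_pos (by linarith : 0 < x)
  have hsq : (x - 1 / 4) * Gamma x ^ 2 < Gamma (x + 1 / 2) ^ 2 := by
    have h := one_lt_kazarinoffQuotient hx
    rwa [kazarinoffQuotient, one_lt_div (mul_pos (by linarith) (by positivity))] at h
  rw [← sqrt_sq hG.le, ← sqrt_mul (by linarith)]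
  exact (sqrt_lt' (Gamma_pos_of_pos (by linarith))).2 hsq

end kazarinoffQuotient

theorem kazarinoff_gamma_ratio_inequality (t : ℝ) (ht : -1 / 2 < t) :
    Gamma ((t + 1) / 2) / Gamma ((t + 2) / 2) < 2 / Real.sqrt (2 * t + 1) := by
  set s := (t + 1) / 2 with hs_def
  have hs : 1 / 4 < s := by rw [hs_def]; linarith
  have hsqrt : √(2 * t + 1) = 2 * √(s - 1 / 4) := by
    rw [show 2 * t + 1 = 2 ^ 2 * (s - 1 / 4) by ring, sqrt_mul (by norm_num), sqrt_sq (by norm_num)]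
  rw [show (t + 2) / 2 = s + 1 / 2 by ring, hsqrt,
    div_lt_div_iff₀ (Gamma_pos_of_pos (by linarith)) (by positivity)]
  linarith [sqrt_sub_quarter_mul_Gamma_lt hs]
end

section
/- For every positive integer n, the double inequality 1/√(π(n + 4/π - 1)) ≤ (2n-1)!!/(2n)!! < 1/√(π(n + 1/4)) holds, and the constants 4/π - 1 and 1/4 are the limiting values of ((2n)!!/((2n-1)!!))²/π - n at n = 1 and n → ∞ respectively. -/
open Real Filter Topology

/-!
Let `p n = wallisRatio n = (2n-1)!!/(2n)!!`. For every constant `c`, Wallis' product gives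
`π (n + c) (p n)² → 1`, and since `p (n+1) = p n · (2n+1)/(2n+2)` the increments of this
sequence have the sign of `(1 - 4c) n + 1 - 3c`. For `c = 1/4` they are positive, so the
sequence stays below its limit `1`; for `c > 1/4` they are negative from some index on, after
which the sequence stays above `1`. With `c = 4/π - 1` this happens from `n = 2` on, because
`π < 22/7`, and at `n = 1` the value is exactly `1`.
-/

theorem le_of_tendsto_of_succ_le_of_ge {α : Type*} [TopologicalSpace α] [Preorder α]
    [OrderClosedTopology α] {f : ℕ → α} {a : α} {N : ℕ} (hf : ∀ n ≥ N, f (n + 1) ≤ f n)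
    (ha : Tendsto f atTop (𝓝 a)) {n : ℕ} (hn : N ≤ n) : a ≤ f n :=
  le_of_tendsto ha <| (eventually_ge_atTop n).mono fun _ hm =>
    antitoneOn_nat_Ici_of_succ_le hf hn (hn.trans hm) hm

theorem one_div_sqrt_le_of_one_le_mul_sq {x p : ℝ} (hp : 0 ≤ p) (h : 1 ≤ x * p ^ 2) :
    1 / √x ≤ p := by
  have hx : 0 < x := by
    by_contra! hx
    nlinarith [mul_nonpos_of_nonpos_of_nonneg hx (sq_nonneg p)]
  rw [div_le_iff₀ (sqrt_pos.2 hx), ← sqrt_sq hp, ← sqrt_mul (sq_nonneg p), mul_comm]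
  exact one_le_sqrt.2 h

theorem lt_one_div_sqrt_of_mul_sq_lt_one {x p : ℝ} (hx : 0 < x) (hp : 0 ≤ p) (h : x * p ^ 2 < 1) :
    p < 1 / √x := by
  rw [lt_div_iff₀ (sqrt_pos.2 hx), ← sqrt_sq hp, ← sqrt_mul (sq_nonneg p), mul_comm]
  exact (sqrt_lt' one_pos).2 (by rwa [one_pow])

noncomputable def wallisRatio (n : ℕ) : ℝ :=
  ((2 * n).factorial : ℝ) / (2 ^ n * n.factorial) / (2 ^ n * n.factorial)

theorem wallisRatio_pos (n : ℕ) : 0 < wallisRatio n := by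
  unfold wallisRatio
  positivity

theorem wallisRatio_one : wallisRatio 1 = 1 / 2 := by
  norm_num [wallisRatio]

theorem wallisRatio_succ (n : ℕ) :
    wallisRatio (n + 1) = wallisRatio n * ((2 * n + 1) / (2 * n + 2)) := by
  rw [wallisRatio, wallisRatio, show 2 * (n + 1) = 2 * n + 1 + 1 by ring, Nat.factorial_succ,
    Nat.factorial_succ, Nat.factorial_succ, pow_succ]
  push_cast
  field_simp
  ring

theorem two_mul_add_one_mul_W_mul_wallisRatio_sq (n : ℕ) :
    (2 * n + 1) * Wallis.W n * wallisRatio n ^ 2 = 1 := by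
  rw [Wallis.W_eq_factorial_ratio, wallisRatio]
  field_simp
  ring

noncomputable def scaledWallisSq (c : ℝ) (n : ℕ) : ℝ := π * (n + c) * wallisRatio n ^ 2

theorem tendsto_scaledWallisSq (c : ℝ) : Tendsto (scaledWallisSq c) atTop (𝓝 1) := by
  have hq : Tendsto (fun n : ℕ => ((n : ℝ) + c) / (2 * n + 1)) atTop (𝓝 (1 / 2)) := by
    have h : Tendsto (fun n : ℕ => c / (2 * (n : ℝ) + 1)) atTop (𝓝 0) :=
      tendsto_const_nhds.div_atTop <| tendsto_atTop_add_const_right _ _ <|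
        tendsto_natCast_atTop_atTop.const_mul_atTop two_pos
    simpa [add_div] using Stirling.tendsto_self_div_two_mul_self_add_one.add h
  have h : Tendsto (fun n : ℕ => π * ((n + c) / (2 * n + 1)) / Wallis.W n) atTop
      (𝓝 (π * (1 / 2) / (π / 2))) :=
    (hq.const_mul π).div Wallis.tendsto_W_nhds_pi_div_two (by positivity)
  convert h using 1
  · funext n
    have := Wallis.W_pos n
    have hW := two_mul_add_one_mul_W_mul_wallisRatio_sq n
    rw [scaledWallisSq]
    field_simp
    linear_combination (n + c) * hW
  · field_simp

theorem scaledWallisSq_succ_sub (c : ℝ) (n : ℕ) :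
    scaledWallisSq c (n + 1) - scaledWallisSq c n =
      π * wallisRatio n ^ 2 * ((1 - 4 * c) * n + 1 - 3 * c) / (2 * n + 2) ^ 2 := by
  rw [scaledWallisSq, scaledWallisSq, wallisRatio_succ]
  push_cast
  field_simp
  ring

theorem scaledWallisSq_quarter_lt_one (n : ℕ) : scaledWallisSq (1 / 4) n < 1 := by
  have hmono : StrictMono (scaledWallisSq (1 / 4)) := strictMono_nat_of_lt_succ fun n => by
    have := wallisRatio_pos n
    rw [← sub_pos, scaledWallisSq_succ_sub]
    norm_num
    positivity
  calc scaledWallisSq (1 / 4) n < scaledWallisSq (1 / 4) (n + 1) := hmono n.lt_succ_self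
    _ ≤ 1 := hmono.monotone.ge_of_tendsto (tendsto_scaledWallisSq _) _

theorem one_le_scaledWallisSq {c : ℝ} {N : ℕ} (hN : 1 - 3 * c ≤ (4 * c - 1) * N) {n : ℕ}
    (hn : N ≤ n) : 1 ≤ scaledWallisSq c n := by
  have hc : 0 ≤ 4 * c - 1 := by
    by_contra! hc
    nlinarith [mul_nonpos_of_nonpos_of_nonneg hc.le (Nat.cast_nonneg (α := ℝ) N)]
  refine le_of_tendsto_of_succ_le_of_ge (fun m hm => ?_) (tendsto_scaledWallisSq c) hn
  have hmN : (4 * c - 1) * N ≤ (4 * c - 1) * m := by gcongr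
  rw [← sub_nonpos, scaledWallisSq_succ_sub]
  refine div_nonpos_of_nonpos_of_nonneg (mul_nonpos_of_nonneg_of_nonpos (by positivity) ?_)
    (by positivity)
  linarith

theorem one_le_scaledWallisSq_four_div_pi_sub_one {n : ℕ} (hn : 1 ≤ n) :
    1 ≤ scaledWallisSq (4 / π - 1) n := by
  rcases hn.eq_or_lt with rfl | hn
  · rw [scaledWallisSq, wallisRatio_one]
    field_simp
    norm_num
  · refine one_le_scaledWallisSq (N := 2) ?_ hn
    have h : (4 * (4 / π - 1) - 1) * 2 - (1 - 3 * (4 / π - 1)) = (44 - 14 * π) / π := by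
      field_simp
      ring
    have := pi_lt_d4
    push_cast
    linarith [div_nonneg (by linarith : (0 : ℝ) ≤ 44 - 14 * π) pi_pos.le]

noncomputable def wallisExcess (n : ℕ) : ℝ := (1 / wallisRatio n) ^ 2 / π - n

theorem wallisExcess_le_iff {c : ℝ} {n : ℕ} : wallisExcess n ≤ c ↔ 1 ≤ scaledWallisSq c n := by
  have := wallisRatio_pos n
  rw [wallisExcess, scaledWallisSq, sub_le_iff_le_add', div_le_iff₀ pi_pos, one_div_pow,
    div_le_iff₀ (by positivity)]
  ring_nf

theorem quarter_lt_wallisExcess (n : ℕ) : 1 / 4 < wallisExcess n :=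
  lt_of_not_ge fun h => (wallisExcess_le_iff.1 h).not_gt (scaledWallisSq_quarter_lt_one n)

theorem tendsto_wallisExcess : Tendsto wallisExcess atTop (𝓝 (1 / 4)) := by
  refine tendsto_order.2 ⟨fun a ha => .of_forall fun n => ha.trans (quarter_lt_wallisExcess n),
    fun a ha => ?_⟩
  obtain ⟨c, hc, hca⟩ := exists_between ha
  obtain ⟨N, hN⟩ := exists_nat_ge ((1 - 3 * c) / (4 * c - 1))
  have hN' : 1 - 3 * c ≤ (4 * c - 1) * N := by
    rw [div_le_iff₀ (by linarith)] at hN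
    linarith
  filter_upwards [eventually_ge_atTop N] with n hn
  exact (wallisExcess_le_iff.2 (one_le_scaledWallisSq hN' hn)).trans_lt (by linarith)

/-- For a positive integer `n`, with `(2n)!! = 2^n · n!` and `(2n-1)!! = (2n)!/(2^n · n!)`,
the best-constant Wallis inequality
`1/√(π(n+4/π-1)) ≤ (2n-1)!!/(2n)!! < 1/√(π(n+1/4))`, where `4/π - 1` is the value of
`((2n)!!/(2n-1)!!)²/π - n` at `n = 1` and `1/4` is its limit as `n → ∞`. -/
theorem best_bounds_wallis :
    (∀ n : ℕ, 0 < n →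
      1 / Real.sqrt (π * (n + 4 / π - 1)) ≤
          (((2 * n).factorial : ℝ) / ((2 : ℝ) ^ n * n.factorial)) / ((2 : ℝ) ^ n * n.factorial) ∧
        (((2 * n).factorial : ℝ) / ((2 : ℝ) ^ n * n.factorial)) / ((2 : ℝ) ^ n * n.factorial) <
          1 / Real.sqrt (π * (n + 1 / 4))) ∧
    (fun n : ℕ =>
        (((2 : ℝ) ^ n * n.factorial) / (((2 * n).factorial : ℝ) / ((2 : ℝ) ^ n * n.factorial))) ^ 2
            / π - n) 1 = 4 / π - 1 ∧
    Tendsto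
      (fun n : ℕ =>
        (((2 : ℝ) ^ n * n.factorial) / (((2 * n).factorial : ℝ) / ((2 : ℝ) ^ n * n.factorial))) ^ 2
            / π - n) atTop (nhds (1 / 4)) := by
  have h_inv (n : ℕ) : (2 : ℝ) ^ n * n.factorial / ((2 * n).factorial / (2 ^ n * n.factorial)) =
      1 / wallisRatio n :=
    (one_div_div _ _).symm
  have h_ratio (n : ℕ) : ((2 * n).factorial : ℝ) / (2 ^ n * n.factorial) / (2 ^ n * n.factorial) =
      wallisRatio n :=
    rfl
  simp only [h_inv, h_ratio]
  refine ⟨fun n hn => ⟨?_, ?_⟩, ?_, tendsto_wallisExcess⟩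
  · exact one_div_sqrt_le_of_one_le_mul_sq (wallisRatio_pos n).le
      (by simpa only [scaledWallisSq, mul_assoc, add_sub_assoc] using one_le_scaledWallisSq_four_div_pi_sub_one hn)
  · exact lt_one_div_sqrt_of_mul_sq_lt_one (by positivity) (wallisRatio_pos n).le
      (by simpa only [scaledWallisSq, mul_assoc] using scaledWallisSq_quarter_lt_one n)
  · norm_num [wallisRatio_one]
end

section
/- For every real number p > 1 and every real number x ≥ 0, with c_p = (Γ(1 + 1/p))^{p/(p-1)}, the double inequality ((x^p + 2)^{1/p} - x)/2 < e^{x^p} ∫_x^∞ e^{-t^p} dt ≤ c_p · ((x^p + 1/c_p)^{1/p} - x) holds. -/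
/-!
Write `G_a(x) = e^{-x^p} ((x^p + a)^{1/p} - x) / a - ∫_x^∞ e^{-t^p} dt`. Then `G_a → 0` at
infinity, and `G_a'(x)` has the sign of `ψ(z)` at `z = x / (x^p + a)^{1/p}`, which increases
from `0` to `1` with `x`, where
`ψ(z) = (a - 1) z^{1-p} - (a p - 1) + (a (p - 1) + 1) z - z^p`
vanishes to second order at `z = 1` and `ψ''(z)` has the sign of `(a - 1) - z^{2p-1}`.
For `a = 2` this forces `ψ > 0` on `(0, 1)`, so `G_2` increases to its limit `0` and is negative.
In general `ψ` is convex then concave, so once nonpositive it stays nonpositive: `G_a` first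
increases and then decreases to `0`. For `a = 1 / c_p` one has `G_a(0) = 0`, whence `G_a ≥ 0`.
-/

open Real Set MeasureTheory Filter Topology

namespace Gautschi

lemma nonneg_of_deriv_sign_change_of_tendsto_zero {f f' : ℝ → ℝ}
    (hf : ContinuousOn f (Ici 0)) (hf' : ∀ x, 0 < x → HasDerivAt f (f' x) x)
    (hsign : ∀ x y, 0 < x → x < y → f' x ≤ 0 → f' y ≤ 0)
    (h0 : 0 ≤ f 0) (hlim : Tendsto f atTop (𝓝 0)) {x : ℝ} (hx : 0 ≤ x) : 0 ≤ f x := by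
  rcases hx.eq_or_lt with rfl | hx
  · exact h0
  by_cases hfx : f' x ≤ 0
  · have hanti : AntitoneOn f (Ici x) := by
      refine antitoneOn_of_hasDerivWithinAt_nonpos (f' := f') (convex_Ici x)
        (hf.mono (Ici_subset_Ici.2 hx.le)) (fun y hy => ?_) (fun y hy => ?_)
      all_goals rw [interior_Ici] at hy
      · exact (hf' y (hx.trans hy)).hasDerivWithinAt
      · exact hsign x y hx hy hfx
    refine le_of_tendsto hlim ?_
    filter_upwards [eventually_ge_atTop x] with y hy
    exact hanti self_mem_Ici hy hy
  · have hmono : MonotoneOn f (Icc 0 x) := by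
      refine monotoneOn_of_hasDerivWithinAt_nonneg (f' := f') (convex_Icc 0 x)
        (hf.mono Icc_subset_Ici_self) (fun y hy => ?_) (fun y hy => ?_)
      all_goals rw [interior_Icc] at hy
      · exact (hf' y hy.1).hasDerivWithinAt
      · by_contra! hfy
        exact hfx (hsign y x hy.1 hy.2 hfy.le)
    exact h0.trans (hmono (left_mem_Icc.2 hx.le) (right_mem_Icc.2 hx.le) hx.le)

lemma neg_of_deriv_pos_of_tendsto_zero {f f' : ℝ → ℝ}
    (hf : ContinuousOn f (Ici 0)) (hf' : ∀ x, 0 < x → HasDerivAt f (f' x) x)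
    (hpos : ∀ x, 0 < x → 0 < f' x) (hlim : Tendsto f atTop (𝓝 0)) {x : ℝ} (hx : 0 ≤ x) :
    f x < 0 := by
  have hmono : StrictMonoOn f (Ici 0) := by
    refine strictMonoOn_of_hasDerivWithinAt_pos (f' := f') (convex_Ici 0) hf
      (fun y hy => ?_) (fun y hy => ?_)
    all_goals rw [interior_Ici] at hy
    · exact (hf' y hy).hasDerivWithinAt
    · exact hpos y hy
  have hx1 : x + 1 ∈ Ici (0 : ℝ) := by simp only [mem_Ici]; linarith
  have hle : f (x + 1) ≤ 0 := by
    refine ge_of_tendsto hlim ?_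
    filter_upwards [eventually_ge_atTop (x + 1)] with y hy
    exact hmono.monotoneOn hx1 (hx1.trans hy) hy
  exact (hmono hx hx1 (by linarith)).trans_le hle

lemma nonpos_of_deriv2_nonpos {g g' g'' : ℝ → ℝ} {w b : ℝ} (hwb : w ≤ b)
    (hg : ∀ y ∈ Icc w b, HasDerivAt g (g' y) y)
    (hg' : ∀ y ∈ Icc w b, HasDerivAt g' (g'' y) y)
    (hg'' : ∀ y ∈ Ioo w b, g'' y ≤ 0) (hb : g b = 0) (hb' : g' b = 0) : g w ≤ 0 := by
  have hanti : AntitoneOn g' (Icc w b) :=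
    antitoneOn_of_hasDerivWithinAt_nonpos (convex_Icc w b)
      (fun y hy => (hg' y hy).continuousAt.continuousWithinAt)
      (fun y hy => (hg' y (interior_subset hy)).hasDerivWithinAt)
      (fun y hy => hg'' y (by rwa [interior_Icc] at hy))
  have hmono : MonotoneOn g (Icc w b) :=
    monotoneOn_of_hasDerivWithinAt_nonneg (convex_Icc w b)
      (fun y hy => (hg y hy).continuousAt.continuousWithinAt)
      (fun y hy => (hg y (interior_subset hy)).hasDerivWithinAt)
      (fun y hy => hb' ▸ hanti (interior_subset hy) (right_mem_Icc.2 hwb)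
        (interior_subset hy).2)
  exact hb ▸ hmono (left_mem_Icc.2 hwb) (right_mem_Icc.2 hwb) hwb

lemma pos_of_deriv2_pos {g g' g'' : ℝ → ℝ} {w b : ℝ} (hwb : w < b)
    (hg : ∀ y ∈ Icc w b, HasDerivAt g (g' y) y)
    (hg' : ∀ y ∈ Icc w b, HasDerivAt g' (g'' y) y)
    (hg'' : ∀ y ∈ Ioo w b, 0 < g'' y) (hb : g b = 0) (hb' : g' b = 0) : 0 < g w := by
  have hmono : StrictMonoOn g' (Icc w b) :=
    strictMonoOn_of_hasDerivWithinAt_pos (convex_Icc w b)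
      (fun y hy => (hg' y hy).continuousAt.continuousWithinAt)
      (fun y hy => (hg' y (interior_subset hy)).hasDerivWithinAt)
      (fun y hy => hg'' y (by rwa [interior_Icc] at hy))
  have hanti : StrictAntiOn g (Icc w b) :=
    strictAntiOn_of_hasDerivWithinAt_neg (convex_Icc w b)
      (fun y hy => (hg y hy).continuousAt.continuousWithinAt)
      (fun y hy => (hg y (interior_subset hy)).hasDerivWithinAt)
      (fun y hy => by
        rw [interior_Icc] at hy
        exact hb' ▸ hmono (Ioo_subset_Icc_self hy) (right_mem_Icc.2 hwb.le) hy.2)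
  exact hb ▸ hanti (left_mem_Icc.2 hwb.le) (right_mem_Icc.2 hwb.le) hwb

variable {p a : ℝ}

noncomputable def psi (p a z : ℝ) : ℝ :=
  (a - 1) * z ^ (1 - p) - (a * p - 1) + (a * (p - 1) + 1) * z - z ^ p

noncomputable def psi' (p a z : ℝ) : ℝ :=
  (a - 1) * ((1 - p) * z ^ (-p)) + (a * (p - 1) + 1) - p * z ^ (p - 1)

noncomputable def psi'' (p a z : ℝ) : ℝ :=
  p * (p - 1) * z ^ (-p - 1) * ((a - 1) - z ^ (2 * p - 1))

lemma psi_one : psi p a 1 = 0 := by simp only [psi, one_rpow]; ring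

lemma psi'_one : psi' p a 1 = 0 := by simp only [psi', one_rpow]; ring

lemma hasDerivAt_psi {z : ℝ} (hz : 0 < z) : HasDerivAt (psi p a) (psi' p a z) z := by
  have h1 := (Real.hasDerivAt_rpow_const (x := z) (p := 1 - p) (Or.inl hz.ne')).const_mul (a - 1)
  have h2 := Real.hasDerivAt_rpow_const (x := z) (p := p) (Or.inl hz.ne')
  refine (((h1.sub_const (a * p - 1)).add ((hasDerivAt_id z).const_mul (a * (p - 1) + 1))).sub
    h2).congr_deriv ?_
  rw [psi', show 1 - p - 1 = -p by ring, mul_one]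

lemma hasDerivAt_psi' {z : ℝ} (hz : 0 < z) : HasDerivAt (psi' p a) (psi'' p a z) z := by
  have h1 := ((Real.hasDerivAt_rpow_const (x := z) (p := -p) (Or.inl hz.ne')).const_mul
    (1 - p)).const_mul (a - 1)
  have h2 := (Real.hasDerivAt_rpow_const (x := z) (p := p - 1) (Or.inl hz.ne')).const_mul p
  refine ((h1.add_const (a * (p - 1) + 1)).sub h2).congr_deriv ?_
  have hsplit : z ^ (p - 1 - 1) = z ^ (-p - 1) * z ^ (2 * p - 1) := by
    rw [← Real.rpow_add hz]; ring_nf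
  rw [psi'', hsplit]
  ring

lemma psi''_eq_mul (hp : 1 < p) {z : ℝ} (hz : 0 < z) :
    ∃ k > 0, psi'' p a z = k * ((a - 1) - z ^ (2 * p - 1)) :=
  ⟨_, mul_pos (mul_pos (by linarith) (by linarith)) (rpow_pos_of_pos hz _), rfl⟩

lemma psi_nonpos_of_le_rpow (hp : 1 < p) {w : ℝ} (hw0 : 0 < w) (hw1 : w ≤ 1)
    (h : a - 1 ≤ w ^ (2 * p - 1)) : psi p a w ≤ 0 := by
  refine nonpos_of_deriv2_nonpos hw1 (fun y hy => hasDerivAt_psi (hw0.trans_le hy.1))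
    (fun y hy => hasDerivAt_psi' (hw0.trans_le hy.1)) (fun y hy => ?_) psi_one psi'_one
  obtain ⟨k, hk, hpsi''⟩ := psi''_eq_mul (a := a) hp (hw0.trans hy.1)
  have : w ^ (2 * p - 1) ≤ y ^ (2 * p - 1) := rpow_le_rpow hw0.le hy.1.le (by linarith)
  rw [hpsi'']
  exact mul_nonpos_of_nonneg_of_nonpos hk.le (by linarith)

lemma psi_pos_of_two_le (hp : 1 < p) (ha : 2 ≤ a) {z : ℝ} (hz0 : 0 < z) (hz1 : z < 1) :
    0 < psi p a z := by
  refine pos_of_deriv2_pos hz1 (fun y hy => hasDerivAt_psi (hz0.trans_le hy.1))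
    (fun y hy => hasDerivAt_psi' (hz0.trans_le hy.1)) (fun y hy => ?_) psi_one psi'_one
  obtain ⟨k, hk, hpsi''⟩ := psi''_eq_mul (a := a) hp (hz0.trans hy.1)
  have : y ^ (2 * p - 1) < 1 := rpow_lt_one (hz0.trans hy.1).le hy.2 (by linarith)
  rw [hpsi'']
  exact mul_pos hk (by linarith)

lemma psi_nonpos_of_lt_of_psi_nonpos (hp : 1 < p) {z z' : ℝ} (hz0 : 0 < z) (hzz' : z < z')
    (hz'1 : z' ≤ 1) (hz : psi p a z ≤ 0) : psi p a z' ≤ 0 := by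
  have hz'0 : 0 < z' := hz0.trans hzz'
  have hq : 0 < 2 * p - 1 := by linarith
  rcases le_or_gt (a - 1) (z' ^ (2 * p - 1)) with h | h
  · exact psi_nonpos_of_le_rpow hp hz'0 hz'1 h
  -- `psi` is convex on `(0, s]` and nonpositive at `min s 1`, hence on `[z, min s 1]`.
  set s := (a - 1) ^ (1 / (2 * p - 1))
  have ha : 0 < a - 1 := (rpow_nonneg hz'0.le _).trans_lt h
  have hs : s ^ (2 * p - 1) = a - 1 := by
    rw [← rpow_mul ha.le, one_div_mul_cancel hq.ne', rpow_one]
  have hz's : z' < s := by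
    rw [← hs] at h
    exact (rpow_lt_rpow_iff hz'0.le (rpow_nonneg ha.le _) hq).1 h
  set z₁ := min s 1 with hz₁_def
  have hz'z₁ : z' ≤ z₁ := le_min hz's.le hz'1
  have hz₁ : psi p a z₁ ≤ 0 := by
    rcases le_total s 1 with hs1 | hs1
    · rw [hz₁_def, min_eq_left hs1]
      exact psi_nonpos_of_le_rpow hp (hz'0.trans hz's) hs1 hs.ge
    · rw [hz₁_def, min_eq_right hs1, psi_one]
  have hconv : ConvexOn ℝ (Icc z z₁) (psi p a) := by
    refine convexOn_of_hasDerivWithinAt2_nonneg (convex_Icc z z₁)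
      (fun y hy => (hasDerivAt_psi (hz0.trans_le hy.1)).continuousAt.continuousWithinAt)
      (fun y hy => (hasDerivAt_psi (hz0.trans_le (interior_subset hy).1)).hasDerivWithinAt)
      (fun y hy => (hasDerivAt_psi' (hz0.trans_le (interior_subset hy).1)).hasDerivWithinAt)
      (fun y hy => ?_)
    rw [interior_Icc] at hy
    obtain ⟨k, hk, hpsi''⟩ := psi''_eq_mul (a := a) hp (hz0.trans hy.1)
    have : y ^ (2 * p - 1) ≤ s ^ (2 * p - 1) :=
      rpow_le_rpow (hz0.trans hy.1).le (hy.2.le.trans (min_le_left s 1)) hq.le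
    rw [hpsi'']
    exact mul_nonneg hk.le (by linarith)
  have hz'_mem : z' ∈ segment ℝ z z₁ := by
    rw [segment_eq_Icc (hzz'.le.trans hz'z₁)]
    exact ⟨hzz'.le, hz'z₁⟩
  exact (hconv.le_on_segment (left_mem_Icc.2 (hzz'.le.trans hz'z₁))
    (right_mem_Icc.2 (hzz'.le.trans hz'z₁)) hz'_mem).trans (max_le hz hz₁)

lemma continuous_exp_neg_rpow (hp : 0 < p) : Continuous fun t : ℝ => exp (-t ^ p) :=
  continuous_exp.comp (continuous_rpow_const hp.le).neg

lemma integrableOn_exp_neg_rpow_Ioi (hp : 0 < p) (x : ℝ) :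
    IntegrableOn (fun t : ℝ => exp (-t ^ p)) (Ioi x) := by
  have h0 : IntegrableOn (fun t : ℝ => exp (-t ^ p)) (Ioi 0) := by
    simpa using integrableOn_rpow_mul_exp_neg_rpow (s := 0) (by norm_num) hp
  rcases le_total 0 x with hx | hx
  · exact h0.mono_set (Ioi_subset_Ioi hx)
  · rw [← Ioc_union_Ioi_eq_Ioi hx]
    exact ((continuous_exp_neg_rpow hp).integrableOn_Icc.mono_set Ioc_subset_Icc_self).union h0

noncomputable def tail (p x : ℝ) : ℝ := ∫ t in Ioi x, exp (-t ^ p)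

lemma tail_zero (hp : 0 < p) : tail p 0 = Gamma (1 / p + 1) := integral_exp_neg_rpow hp

lemma tail_eq_tail_zero_sub (hp : 0 < p) (x : ℝ) :
    tail p x = tail p 0 - ∫ t in (0 : ℝ)..x, exp (-t ^ p) := by
  rw [tail, tail, ← intervalIntegral.integral_Ioi_sub_Ioi' (integrableOn_exp_neg_rpow_Ioi hp 0)
    (integrableOn_exp_neg_rpow_Ioi hp x), sub_sub_cancel]

lemma hasDerivAt_tail (hp : 0 < p) (x : ℝ) : HasDerivAt (tail p) (-exp (-x ^ p)) x := by
  rw [funext (tail_eq_tail_zero_sub hp)]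
  exact (((continuous_exp_neg_rpow hp).integral_hasStrictDerivAt 0 x).hasDerivAt).const_sub _

lemma continuous_tail (hp : 0 < p) : Continuous (tail p) :=
  continuous_iff_continuousAt.2 fun x => (hasDerivAt_tail hp x).continuousAt

lemma tendsto_tail_atTop (hp : 0 < p) : Tendsto (tail p) atTop (𝓝 0) := by
  have h := tendsto_const_nhds (x := tail p 0) |>.sub (intervalIntegral_tendsto_integral_Ioi 0
    (integrableOn_exp_neg_rpow_Ioi hp 0) tendsto_id)
  rw [← tail, sub_self] at h
  exact h.congr fun x => (tail_eq_tail_zero_sub hp x).symm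

noncomputable def bound (p a x : ℝ) : ℝ := exp (-x ^ p) * ((x ^ p + a) ^ (1 / p) - x) / a

lemma exp_mul_bound (a x : ℝ) : exp (x ^ p) * bound p a x = ((x ^ p + a) ^ (1 / p) - x) / a := by
  rw [bound, mul_div_assoc, ← mul_assoc, ← exp_add, add_neg_cancel, exp_zero, one_mul]

lemma bound_zero (hp : 0 < p) : bound p a 0 = a ^ (1 / p) / a := by
  simp [bound, zero_rpow hp.ne']

lemma continuous_bound (hp : 0 < p) : Continuous (bound p a) := by
  have hxp : Continuous fun x : ℝ => x ^ p := continuous_rpow_const hp.le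
  unfold bound
  exact (((continuous_exp.comp hxp.neg).mul ((continuous_rpow_const (by positivity)).comp
    (hxp.add continuous_const) |>.sub continuous_id))).div_const a

lemma rpow_add_rpow_one_div_sub_mem_Icc (hp : 1 ≤ p) (ha : 0 ≤ a) {x : ℝ} (hx : 0 ≤ x) :
    (x ^ p + a) ^ (1 / p) - x ∈ Icc 0 (a ^ (1 / p)) := by
  have hp0 : p ≠ 0 := by positivity
  have hxx : (x ^ p) ^ (1 / p) = x := by rw [← rpow_mul hx, mul_one_div_cancel hp0, rpow_one]
  have haa : (a ^ (1 / p)) ^ p = a := by rw [← rpow_mul ha, one_div_mul_cancel hp0, rpow_one]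
  constructor
  · rw [sub_nonneg]
    conv_lhs => rw [← hxx]
    exact rpow_le_rpow (rpow_nonneg hx p) (by linarith) (by positivity)
  · have := rpow_add_rpow_le_add hx (rpow_nonneg ha (1 / p)) hp
    rw [haa] at this
    linarith

lemma tendsto_bound_atTop (hp : 1 ≤ p) (ha : 0 ≤ a) : Tendsto (bound p a) atTop (𝓝 0) := by
  have hexp : Tendsto (fun x : ℝ => exp (-x ^ p)) atTop (𝓝 0) :=
    tendsto_exp_atBot.comp (tendsto_neg_atTop_atBot.comp (tendsto_rpow_atTop (by linarith)))
  have hlim : Tendsto (fun x : ℝ => exp (-x ^ p) * a ^ (1 / p) / a) atTop (𝓝 0) := by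
    simpa using (hexp.mul_const (a ^ (1 / p))).div_const a
  refine tendsto_of_tendsto_of_tendsto_of_le_of_le' tendsto_const_nhds hlim ?_ ?_
  all_goals
    filter_upwards [eventually_ge_atTop 0] with x hx
    have hmem := rpow_add_rpow_one_div_sub_mem_Icc hp ha hx
    unfold bound
  · have := hmem.1
    positivity
  · gcongr
    exact hmem.2

noncomputable def ratio (p a x : ℝ) : ℝ := x / (x ^ p + a) ^ (1 / p)

lemma ratio_eq (hp : 0 < p) (ha : 0 ≤ a) {x : ℝ} (hx : 0 ≤ x) :
    ratio p a x = (x ^ p / (x ^ p + a)) ^ (1 / p) := by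
  rw [ratio, div_rpow (rpow_nonneg hx p) (by positivity), ← rpow_mul hx,
    mul_one_div_cancel hp.ne', rpow_one]

lemma ratio_pos (hp : 0 < p) (ha : 0 ≤ a) {x : ℝ} (hx : 0 < x) : 0 < ratio p a x := by
  rw [ratio_eq hp ha hx.le]
  have := rpow_pos_of_pos hx p
  positivity

lemma ratio_lt_one (hp : 0 < p) (ha : 0 < a) {x : ℝ} (hx : 0 ≤ x) : ratio p a x < 1 := by
  rw [ratio_eq hp ha.le hx]
  have := rpow_nonneg hx p
  exact rpow_lt_one (by positivity) ((div_lt_one (by positivity)).2 (by linarith))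
    (by positivity)

lemma ratio_strictMonoOn (hp : 0 < p) (ha : 0 < a) : StrictMonoOn (ratio p a) (Ioi 0) := by
  intro x hx y hy hxy
  rw [ratio_eq hp ha.le (le_of_lt hx), ratio_eq hp ha.le (le_of_lt hy)]
  have hxp := rpow_pos_of_pos (show 0 < x from hx) p
  have hxy' : x ^ p < y ^ p := rpow_lt_rpow (le_of_lt hx) hxy hp
  refine rpow_lt_rpow (by positivity) ?_ (by positivity)
  rw [div_lt_div_iff₀ (by positivity) (by linarith)]
  nlinarith

lemma hasDerivAt_bound (hp : 0 < p) (ha : 0 < a) {x : ℝ} (hx : 0 < x) :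
    HasDerivAt (bound p a) (exp (-x ^ p) * ((x ^ (p - 1) * (x ^ p + a) ^ (1 / p - 1) - 1)
      - p * x ^ (p - 1) * ((x ^ p + a) ^ (1 / p) - x)) / a) x := by
  have hxp : HasDerivAt (fun x : ℝ => x ^ p) (p * x ^ (p - 1)) x :=
    hasDerivAt_rpow_const (Or.inl hx.ne')
  have hsum : 0 < x ^ p + a := by have := rpow_pos_of_pos hx p; positivity
  have hexp := (hasDerivAt_exp (-x ^ p)).comp x hxp.neg
  have hroot := ((hasDerivAt_rpow_const (p := 1 / p) (Or.inl hsum.ne')).comp x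
    (hxp.add_const a)).sub (hasDerivAt_id x)
  refine ((hexp.mul hroot).div_const a).congr_deriv ?_
  simp only [Function.comp_apply, Pi.neg_apply, Pi.sub_apply, id]
  field_simp
  ring

lemma ratio_rpow_mul_psi_ratio (hp : 0 < p) (ha : 0 < a) {x : ℝ} (hx : 0 < x) :
    ratio p a x ^ (p - 1) * (x ^ p + a) / a * psi p a (ratio p a x) =
      x ^ (p - 1) * (x ^ p + a) ^ (1 / p - 1) + (a - 1)
        - p * x ^ (p - 1) * ((x ^ p + a) ^ (1 / p) - x) := by
  have hxp : 0 < x ^ p := rpow_pos_of_pos hx p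
  have hsum : 0 < x ^ p + a := by positivity
  have hroot : 0 < (x ^ p + a) ^ (1 / p) := rpow_pos_of_pos hsum _
  have hz : 0 < ratio p a x := div_pos hx hroot
  have hzp : ratio p a x ^ p = x ^ p / (x ^ p + a) := by
    rw [ratio, div_rpow hx.le hroot.le, ← rpow_mul hsum.le, one_div_mul_cancel hp.ne', rpow_one]
  have hxp1 : x ^ (p - 1) = x ^ p / x := by rw [rpow_sub hx, rpow_one]
  have hzp1 : ratio p a x ^ (p - 1) = x ^ p / (x ^ p + a) / ratio p a x := by
    rw [rpow_sub hz, rpow_one, hzp]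
  have hz1p : ratio p a x ^ (1 - p) = ratio p a x / (x ^ p / (x ^ p + a)) := by
    rw [rpow_sub hz, rpow_one, hzp]
  have hsum1 : (x ^ p + a) ^ (1 / p - 1) = (x ^ p + a) ^ (1 / p) / (x ^ p + a) := by
    rw [rpow_sub hsum, rpow_one]
  rw [psi, hxp1, hzp1, hz1p, hsum1, hzp, ratio]
  field_simp
  ring

noncomputable def gap (p a x : ℝ) : ℝ := bound p a x - tail p x

noncomputable def gapWeight (p a x : ℝ) : ℝ :=
  exp (-x ^ p) / a * (ratio p a x ^ (p - 1) * (x ^ p + a) / a)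

lemma gapWeight_pos (hp : 0 < p) (ha : 0 < a) {x : ℝ} (hx : 0 < x) : 0 < gapWeight p a x := by
  have := rpow_pos_of_pos (ratio_pos hp ha.le hx) (p - 1)
  have := rpow_pos_of_pos hx p
  unfold gapWeight
  positivity

lemma hasDerivAt_gap (hp : 0 < p) (ha : 0 < a) {x : ℝ} (hx : 0 < x) :
    HasDerivAt (gap p a) (gapWeight p a x * psi p a (ratio p a x)) x := by
  refine ((hasDerivAt_bound hp ha hx).sub (hasDerivAt_tail hp x)).congr_deriv ?_
  rw [gapWeight, mul_assoc (exp (-x ^ p) / a), ratio_rpow_mul_psi_ratio hp ha hx]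
  field_simp
  ring

lemma continuous_gap (hp : 0 < p) : Continuous (gap p a) :=
  (continuous_bound hp).sub (continuous_tail hp)

lemma tendsto_gap_atTop (hp : 1 ≤ p) (ha : 0 ≤ a) : Tendsto (gap p a) atTop (𝓝 0) := by
  have h := (tendsto_bound_atTop hp ha).sub (tendsto_tail_atTop (p := p) (by linarith))
  rwa [sub_zero] at h

lemma gap_nonneg (hp : 1 < p) (ha : 0 < a) (h0 : 0 ≤ gap p a 0) {x : ℝ} (hx : 0 ≤ x) :
    0 ≤ gap p a x := by
  have hp0 : 0 < p := by linarith
  refine nonneg_of_deriv_sign_change_of_tendsto_zero (continuous_gap hp0).continuousOn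
    (fun y hy => hasDerivAt_gap hp0 ha hy) (fun y z hy hyz hgy => ?_) h0
    (tendsto_gap_atTop hp.le ha.le) hx
  have hz : 0 < z := hy.trans hyz
  refine mul_nonpos_of_nonneg_of_nonpos (gapWeight_pos hp0 ha hz).le ?_
  exact psi_nonpos_of_lt_of_psi_nonpos hp (ratio_pos hp0 ha.le hy)
    (ratio_strictMonoOn hp0 ha hy hz hyz) (ratio_lt_one hp0 ha hz.le).le
    (nonpos_of_mul_nonpos_right hgy (gapWeight_pos hp0 ha hy))

lemma gap_neg (hp : 1 < p) (ha : 2 ≤ a) {x : ℝ} (hx : 0 ≤ x) : gap p a x < 0 := by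
  have hp0 : 0 < p := by linarith
  have ha0 : 0 < a := by linarith
  refine neg_of_deriv_pos_of_tendsto_zero (continuous_gap hp0).continuousOn
    (fun y hy => hasDerivAt_gap hp0 ha0 hy) (fun y hy => ?_) (tendsto_gap_atTop hp.le ha0.le) hx
  exact mul_pos (gapWeight_pos hp0 ha0 hy)
    (psi_pos_of_two_le hp ha (ratio_pos hp0 ha0.le hy) (ratio_lt_one hp0 ha0 hy.le))

end Gautschi

theorem gautschi_incomplete_gamma_inequality (p x : ℝ) (hp : 1 < p) (hx : 0 ≤ x) :
    ((x ^ p + 2) ^ (1 / p) - x) / 2 < Real.exp (x ^ p) * ∫ t in Set.Ioi x, Real.exp (-t ^ p) ∧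
      Real.exp (x ^ p) * ∫ t in Set.Ioi x, Real.exp (-t ^ p) ≤
        Gamma (1 + 1 / p) ^ (p / (p - 1)) *
          ((x ^ p + 1 / Gamma (1 + 1 / p) ^ (p / (p - 1))) ^ (1 / p) - x) := by
  open Gautschi in
  have hp0 : 0 < p := by linarith
  have hΓ : 0 < Gamma (1 + 1 / p) := Gamma_pos_of_pos (by positivity)
  set c := Gamma (1 + 1 / p) ^ (p / (p - 1)) with hc_def
  have hc : 0 < c := rpow_pos_of_pos hΓ _
  have hgap0 : gap p (1 / c) 0 = 0 := by
    rw [gap, bound_zero hp0, tail_zero hp0, sub_eq_zero, add_comm]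
    calc (1 / c) ^ (1 / p) / (1 / c) = c ^ (1 - 1 / p) := by
          rw [div_rpow zero_le_one hc.le, one_rpow, rpow_sub hc, rpow_one]
          field_simp
      _ = Gamma (1 + 1 / p) := by
          have hexp : p / (p - 1) * (1 - 1 / p) = 1 := by field_simp [sub_ne_zero.2 hp.ne']
          rw [hc_def, ← rpow_mul hΓ.le, hexp, rpow_one]
  constructor
  · have h := mul_lt_mul_of_pos_left (sub_neg.1 (gap_neg hp le_rfl hx)) (exp_pos (x ^ p))
    rwa [exp_mul_bound] at h
  · have h := mul_le_mul_of_nonneg_left (sub_nonneg.1 (gap_nonneg hp (by positivity) hgap0.ge hx))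
      (exp_pos (x ^ p)).le
    rwa [exp_mul_bound, div_div_eq_mul_div, div_one, mul_comm _ c] at h
end

section
/- For every real number x > 0, the inequality ψ'(x) · e^{ψ(x)} < 1 holds, where ψ is the digamma function and ψ' its derivative (the trigamma function). -/
/-!
Put `G = ψ' · exp ψ`, so that `G' = (ψ'² + ψ'') · exp ψ`. From `ψ(x + 1) = ψ(x) + 1/x` and the
convexity bounds `log (x - 1) ≤ ψ(x) ≤ log x` one gets `ψ(x) = ψ(1) + ∑ₘ (1/(1 + m) - 1/(x + m))`,
hence `ψ' = ∑ₙ (x + n)⁻²` and `ψ'' = -2 ∑ₙ (x + n)⁻³`. Telescoping against truncated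
Euler–Maclaurin expansions gives `-ψ'' < ψ'²` for `x ≥ 1`, and one step of the recurrences for
`ψ'` and `ψ''` extends it to `0 < x < 1`; thus `G` is strictly increasing. The same telescoping
gives `ψ'(x) ≤ 1/x + 1/x²`, which with `exp ψ(x) ≤ x` yields `G(x) ≤ 1 + 1/x → 1`, so `G < 1`.
-/

open Real

/-- The digamma (psi) function, the derivative of `log ∘ Γ`. -/
noncomputable def digamma : ℝ → ℝ :=
  deriv fun x : ℝ => Real.log (Real.Gamma x)

open Filter Topology Set

section Telescoping

variable {a b : ℕ → ℝ}

lemma tendsto_sum_range_sub_succ (hb : Tendsto b atTop (𝓝 0)) :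
    Tendsto (fun N => ∑ n ∈ Finset.range N, (b n - b (n + 1))) atTop (𝓝 (b 0)) := by
  simp_rw [Finset.sum_range_sub']
  simpa using tendsto_const_nhds.sub hb

lemma le_tsum_of_sub_succ_le (ha : Summable a) (hb : Tendsto b atTop (𝓝 0))
    (h : ∀ n, b n - b (n + 1) ≤ a n) : b 0 ≤ ∑' n, a n :=
  le_of_tendsto_of_tendsto' (tendsto_sum_range_sub_succ hb) ha.hasSum.tendsto_sum_nat
    fun _ => Finset.sum_le_sum fun n _ => h n

lemma tsum_le_of_le_sub_succ (ha : Summable a) (hb : Tendsto b atTop (𝓝 0))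
    (h : ∀ n, a n ≤ b n - b (n + 1)) : ∑' n, a n ≤ b 0 :=
  le_of_tendsto_of_tendsto' ha.hasSum.tendsto_sum_nat (tendsto_sum_range_sub_succ hb)
    fun _ => Finset.sum_le_sum fun n _ => h n

end Telescoping

lemma tendsto_inv_add_nat (x : ℝ) : Tendsto (fun n : ℕ => (x + n)⁻¹) atTop (𝓝 0) :=
  tendsto_inv_atTop_zero.comp (tendsto_atTop_add_const_left _ x tendsto_natCast_atTop_atTop)

lemma summable_inv_add_nat_pow {k : ℕ} (hk : 2 ≤ k) {x : ℝ} (hx : 0 < x) :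
    Summable fun n : ℕ => (x + n)⁻¹ ^ k := by
  have := (Real.summable_one_div_nat_add_rpow x k).mpr (by exact_mod_cast hk)
  refine this.congr fun n => ?_
  rw [abs_of_pos (by positivity), Real.rpow_natCast, add_comm, one_div, inv_pow]

lemma summable_inv_add_nat_sub_inv_add_nat {a b : ℝ} (ha : 0 < a) (hb : 0 < b) :
    Summable fun m : ℕ => (a + m)⁻¹ - (b + m)⁻¹ := by
  have hc : 0 < min a b := lt_min ha hb
  refine .of_norm_bounded ((summable_inv_add_nat_pow le_rfl hc).mul_left |b - a|) fun m => ?_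
  have : (a + m)⁻¹ - (b + m)⁻¹ = (b - a) * ((a + m)⁻¹ * (b + m)⁻¹) := by
    field_simp
    ring
  rw [this, norm_mul, Real.norm_eq_abs, Real.norm_of_nonneg (by positivity), sq]
  gcongr
  exacts [min_le_left a b, min_le_right a b]

lemma hasDerivAt_inv_add_pow (k : ℕ) {c y : ℝ} (hy : y + c ≠ 0) :
    HasDerivAt (fun z : ℝ => (z + c)⁻¹ ^ k) (-(k * (y + c)⁻¹ ^ (k + 1))) y := by
  refine ((((hasDerivAt_id' y).add_const c).fun_inv hy).fun_pow k).congr_deriv ?_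
  rcases k with _ | k
  · simp
  · rw [Nat.add_sub_cancel, neg_div, one_div, ← inv_pow]
    push_cast
    ring

/-- The Hurwitz zeta value `ζ(k, x)`. On `x > 0`, `ψ' = hurwitzSum 2` and
`ψ'' = -2 * hurwitzSum 3`. -/
noncomputable def hurwitzSum (k : ℕ) (x : ℝ) : ℝ := ∑' n : ℕ, (x + n)⁻¹ ^ k

section HurwitzSum

variable {k : ℕ} {x : ℝ}

lemma hurwitzSum_eq_add (hk : 2 ≤ k) (hx : 0 < x) :
    hurwitzSum k x = x⁻¹ ^ k + hurwitzSum k (x + 1) := by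
  rw [hurwitzSum, (summable_inv_add_nat_pow hk hx).tsum_eq_zero_add, hurwitzSum]
  simp only [Nat.cast_zero, add_zero, Nat.cast_succ, add_assoc, add_comm (1 : ℝ)]

lemma hasDerivAt_hurwitzSum (hk : 2 ≤ k) (hx : 0 < x) :
    HasDerivAt (hurwitzSum k) (-(k * hurwitzSum (k + 1) x)) x := by
  have hx2 : 0 < x / 2 := by positivity
  have hxt : x ∈ Ioi (x / 2) := by rw [mem_Ioi]; linarith
  rw [hurwitzSum, ← tsum_mul_left, ← tsum_neg]
  refine hasDerivAt_tsum_of_isPreconnected (u := fun n : ℕ => k * (x / 2 + n)⁻¹ ^ (k + 1))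
    ((summable_inv_add_nat_pow (by omega) hx2).mul_left _) isOpen_Ioi isPreconnected_Ioi
    (fun n y (hy : x / 2 < y) => hasDerivAt_inv_add_pow k (by linarith [n.cast_nonneg (α := ℝ)]))
    (fun n y (hy : x / 2 < y) => ?_) hxt (summable_inv_add_nat_pow hk hx) hxt
  have : 0 < y := by linarith
  rw [norm_neg, norm_mul, Real.norm_natCast, norm_pow, Real.norm_of_nonneg (by positivity)]
  gcongr

end HurwitzSum

section Bounds

variable {q f : ℝ → ℝ} {x : ℝ}

lemma le_tsum_add_nat_of_sub_le (hq : Continuous q) (hq0 : q 0 = 0) (hx : 0 < x)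
    (hf : Summable fun n : ℕ => f (x + n)) (h : ∀ y, 0 < y → q y⁻¹ - q (y + 1)⁻¹ ≤ f y) :
    q x⁻¹ ≤ ∑' n : ℕ, f (x + n) := by
  have hlim : Tendsto (fun n : ℕ => q (x + n)⁻¹) atTop (𝓝 0) :=
    hq0 ▸ (hq.tendsto 0).comp (tendsto_inv_add_nat x)
  simpa using le_tsum_of_sub_succ_le hf hlim
    fun n => by simpa [add_assoc] using h (x + n) (by positivity)

lemma tsum_add_nat_le_of_le_sub (hq : Continuous q) (hq0 : q 0 = 0) (hx : 0 < x)
    (hf : Summable fun n : ℕ => f (x + n)) (h : ∀ y, 0 < y → f y ≤ q y⁻¹ - q (y + 1)⁻¹) :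
    ∑' n : ℕ, f (x + n) ≤ q x⁻¹ := by
  have hlim : Tendsto (fun n : ℕ => q (x + n)⁻¹) atTop (𝓝 0) :=
    hq0 ▸ (hq.tendsto 0).comp (tendsto_inv_add_nat x)
  simpa using tsum_le_of_le_sub_succ hf hlim
    fun n => by simpa [add_assoc] using h (x + n) (by positivity)

lemma le_hurwitzSum_two (hx : 0 < x) :
    x⁻¹ + x⁻¹ ^ 2 / 2 + x⁻¹ ^ 3 / 6 - x⁻¹ ^ 5 / 30 ≤ hurwitzSum 2 x := by
  refine le_tsum_add_nat_of_sub_le (q := fun u => u + u ^ 2 / 2 + u ^ 3 / 6 - u ^ 5 / 30)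
    (f := fun y => y⁻¹ ^ 2) (by fun_prop) (by norm_num) hx
    (summable_inv_add_nat_pow le_rfl hx) fun y hy => ?_
  rw [← sub_nonneg]
  have : y⁻¹ ^ 2 - ((y⁻¹ + y⁻¹ ^ 2 / 2 + y⁻¹ ^ 3 / 6 - y⁻¹ ^ 5 / 30) -
      ((y + 1)⁻¹ + (y + 1)⁻¹ ^ 2 / 2 + (y + 1)⁻¹ ^ 3 / 6 - (y + 1)⁻¹ ^ 5 / 30)) =
      (5 * y ^ 2 + 5 * y + 1) / (30 * y ^ 5 * (y + 1) ^ 5) := by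
    field_simp
    ring
  rw [this]
  positivity

lemma hurwitzSum_two_le (hx : 0 < x) : hurwitzSum 2 x ≤ x⁻¹ + x⁻¹ ^ 2 := by
  refine tsum_add_nat_le_of_le_sub (q := fun u => u + u ^ 2) (f := fun y => y⁻¹ ^ 2)
    (by fun_prop) (by norm_num) hx (summable_inv_add_nat_pow le_rfl hx) fun y hy => ?_
  rw [← sub_nonneg]
  have : (y⁻¹ + y⁻¹ ^ 2) - ((y + 1)⁻¹ + (y + 1)⁻¹ ^ 2) - y⁻¹ ^ 2 = 1 / (y * (y + 1) ^ 2) := by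
    field_simp
    ring
  rw [this]
  positivity

lemma two_mul_hurwitzSum_three_le (hx : 0 < x) :
    2 * hurwitzSum 3 x ≤ x⁻¹ ^ 2 + x⁻¹ ^ 3 + x⁻¹ ^ 4 / 2 := by
  rw [hurwitzSum, ← tsum_mul_left]
  refine tsum_add_nat_le_of_le_sub (q := fun u => u ^ 2 + u ^ 3 + u ^ 4 / 2)
    (f := fun y => 2 * y⁻¹ ^ 3) (by fun_prop) (by norm_num) hx
    ((summable_inv_add_nat_pow (by norm_num) hx).mul_left 2) fun y hy => ?_
  rw [← sub_nonneg]
  have : (y⁻¹ ^ 2 + y⁻¹ ^ 3 + y⁻¹ ^ 4 / 2) - ((y + 1)⁻¹ ^ 2 + (y + 1)⁻¹ ^ 3 + (y + 1)⁻¹ ^ 4 / 2) -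
      2 * y⁻¹ ^ 3 = (2 * y + 1) / (2 * y ^ 4 * (y + 1) ^ 4) := by
    field_simp
    ring
  rw [this]
  positivity

lemma two_mul_hurwitzSum_three_lt_sq_of_one_le (hx : 1 ≤ x) :
    2 * hurwitzSum 3 x < hurwitzSum 2 x ^ 2 := by
  have hx0 : 0 < x := by linarith
  have hu : 0 < x⁻¹ := by positivity
  have hu1 : x⁻¹ ≤ 1 := inv_le_one_of_one_le₀ hx
  set u := x⁻¹
  have hlow := le_hurwitzSum_two hx0
  have hq : 0 ≤ u + u ^ 2 / 2 + u ^ 3 / 6 - u ^ 5 / 30 := by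
    nlinarith [pow_le_one₀ hu.le hu1 (n := 4), pow_pos hu 2, pow_pos hu 3]
  calc 2 * hurwitzSum 3 x ≤ u ^ 2 + u ^ 3 + u ^ 4 / 2 := two_mul_hurwitzSum_three_le hx0
    _ < (u + u ^ 2 / 2 + u ^ 3 / 6 - u ^ 5 / 30) ^ 2 := by
      nlinarith [pow_pos hu 4, pow_pos hu 5, pow_le_one₀ hu.le hu1 (n := 2),
        pow_le_one₀ hu.le hu1 (n := 3), pow_le_one₀ hu.le hu1 (n := 4)]
    _ ≤ hurwitzSum 2 x ^ 2 := pow_le_pow_left₀ hq hlow 2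

lemma sub_le_hurwitzSum_two_add_one (hx : 0 < x) :
    x⁻¹ - x⁻¹ ^ 2 / 2 ≤ hurwitzSum 2 (x + 1) := by
  refine le_trans ?_ (le_hurwitzSum_two (by linarith))
  rw [← sub_nonneg]
  have : ((x + 1)⁻¹ + (x + 1)⁻¹ ^ 2 / 2 + (x + 1)⁻¹ ^ 3 / 6 - (x + 1)⁻¹ ^ 5 / 30) -
      (x⁻¹ - x⁻¹ ^ 2 / 2) =
      (5 * x ^ 4 + 25 * x ^ 3 + 49 * x ^ 2 + 45 * x + 15) / (30 * x ^ 2 * (x + 1) ^ 5) := by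
    field_simp
    ring
  rw [this]
  positivity

lemma two_mul_hurwitzSum_three_lt_sq (hx : 0 < x) :
    2 * hurwitzSum 3 x < hurwitzSum 2 x ^ 2 := by
  rcases le_or_gt 1 x with hx1 | hx1
  · exact two_mul_hurwitzSum_three_lt_sq_of_one_le hx1
  have hnext := two_mul_hurwitzSum_three_lt_sq_of_one_le (x := x + 1) (by linarith)
  have hA := sub_le_hurwitzSum_two_add_one hx
  rw [hurwitzSum_eq_add le_rfl hx, hurwitzSum_eq_add (by norm_num) hx]
  -- with `u = x⁻¹` and `A = ψ'(x + 1) ≥ u - u²/2`, one has `(u² + A)² - 2u³ ≥ A²`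
  nlinarith [mul_le_mul_of_nonneg_left hA (sq_nonneg x⁻¹)]

end Bounds

section Digamma

variable {x : ℝ}

lemma hasDerivAt_log_Gamma (hx : 0 < x) :
    HasDerivAt (fun y => log (Gamma y)) (digamma x) x :=
  ((differentiableAt_Gamma fun m => ((neg_nonpos.2 m.cast_nonneg).trans_lt hx).ne').log
    (Gamma_pos_of_pos hx).ne').hasDerivAt

lemma digamma_add_one (hx : 0 < x) : digamma (x + 1) = digamma x + x⁻¹ := by
  have hshift : HasDerivAt (fun y => log (Gamma (y + 1))) (digamma (x + 1)) x :=
    (hasDerivAt_log_Gamma (by linarith)).comp_add_const x 1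
  have hfeq : (fun y => log (Gamma (y + 1))) =ᶠ[𝓝 x] fun y => log (Gamma y) + log y := by
    filter_upwards [Ioi_mem_nhds hx] with y (hy : 0 < y)
    rw [Gamma_add_one hy.ne', log_mul hy.ne' (Gamma_pos_of_pos hy).ne', add_comm]
  exact hshift.unique
    (((hasDerivAt_log_Gamma hx).add (hasDerivAt_log hx.ne')).congr_of_eventuallyEq hfeq)

lemma digamma_add_nat (hx : 0 < x) (n : ℕ) :
    digamma (x + n) = digamma x + ∑ m ∈ Finset.range n, (x + m)⁻¹ := by
  induction n with
  | zero => simp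
  | succ n ih =>
    rw [Nat.cast_succ, ← add_assoc, digamma_add_one (by positivity), ih,
      Finset.sum_range_succ, add_assoc]

lemma slope_log_Gamma (hx : 0 < x) : slope (log ∘ Gamma) x (x + 1) = log x := by
  rw [slope_def_field, Function.comp_apply, Function.comp_apply, Gamma_add_one hx.ne',
    log_mul hx.ne' (Gamma_pos_of_pos hx).ne']
  simp

lemma digamma_le_log (hx : 0 < x) : digamma x ≤ log x :=
  slope_log_Gamma hx ▸ convexOn_log_Gamma.le_slope_of_hasDerivAt hx
    (by simp only [mem_Ioi]; linarith) (by linarith) (hasDerivAt_log_Gamma hx)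

lemma log_le_digamma_add_one (hx : 0 < x) : log x ≤ digamma (x + 1) :=
  slope_log_Gamma hx ▸ convexOn_log_Gamma.slope_le_of_hasDerivAt hx
    (by simp only [mem_Ioi]; linarith) (by linarith) (hasDerivAt_log_Gamma (by linarith))

lemma tendsto_digamma_sub_log : Tendsto (fun y => digamma y - log y) atTop (𝓝 0) := by
  have hlog : Tendsto (fun y => log (y - 1) - log y) atTop (𝓝 0) := by
    simpa [← sub_eq_add_neg] using tendsto_log_comp_add_sub_log (-1)
  refine tendsto_of_tendsto_of_tendsto_of_le_of_le' hlog tendsto_const_nhds ?_ ?_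
  · filter_upwards [eventually_gt_atTop 1] with y hy
    have := log_le_digamma_add_one (x := y - 1) (by linarith)
    rw [sub_add_cancel] at this
    linarith
  · filter_upwards [eventually_gt_atTop 0] with y hy
    linarith [digamma_le_log hy]

lemma tendsto_digamma_add_sub_digamma_add (a b : ℝ) :
    Tendsto (fun y => digamma (y + a) - digamma (y + b)) atTop (𝓝 0) := by
  have hshift (c : ℝ) : Tendsto (fun y => digamma (y + c) - log (y + c)) atTop (𝓝 0) :=
    tendsto_digamma_sub_log.comp (tendsto_atTop_add_const_right _ c tendsto_id)
  have := ((hshift a).sub (hshift b)).add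
    ((tendsto_log_comp_add_sub_log a).sub (tendsto_log_comp_add_sub_log b))
  simp only [sub_zero, add_zero] at this
  exact this.congr fun y => by ring

lemma hasSum_digamma_sub_digamma_one (hx : 0 < x) :
    HasSum (fun m : ℕ => (1 + m : ℝ)⁻¹ - (x + m)⁻¹) (digamma x - digamma 1) := by
  rw [(summable_inv_add_nat_sub_inv_add_nat one_pos hx).hasSum_iff_tendsto_nat]
  have hpartial (N : ℕ) : ∑ m ∈ Finset.range N, ((1 + m : ℝ)⁻¹ - (x + m)⁻¹) =
      digamma x - digamma 1 - (digamma (N + x) - digamma (N + 1)) := by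
    rw [Finset.sum_sub_distrib, add_comm (N : ℝ), add_comm (N : ℝ), digamma_add_nat hx,
      digamma_add_nat one_pos]
    ring
  simp_rw [hpartial]
  simpa using tendsto_const_nhds.sub
    ((tendsto_digamma_add_sub_digamma_add x 1).comp tendsto_natCast_atTop_atTop)

lemma hasDerivAt_digamma (hx : 0 < x) : HasDerivAt digamma (hurwitzSum 2 x) x := by
  have hxt : x ∈ Ioi (x / 2) := by rw [mem_Ioi]; linarith
  have hseries : HasDerivAt (fun y : ℝ => ∑' m : ℕ, ((1 + m : ℝ)⁻¹ - (y + m)⁻¹))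
      (hurwitzSum 2 x) x := by
    refine hasDerivAt_tsum_of_isPreconnected (u := fun m : ℕ => (x / 2 + m)⁻¹ ^ 2)
      (g := fun (m : ℕ) (y : ℝ) => (1 + m : ℝ)⁻¹ - (y + m)⁻¹) (g' := fun m y => (y + m)⁻¹ ^ 2)
      (summable_inv_add_nat_pow le_rfl (by positivity)) isOpen_Ioi isPreconnected_Ioi
      (fun m y (hy : x / 2 < y) => ?_) (fun m y (hy : x / 2 < y) => ?_) hxt
      (summable_inv_add_nat_sub_inv_add_nat one_pos hx) hxt
    · have : 0 < y := by linarith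
      simpa using (hasDerivAt_inv_add_pow 1 (c := m) (y := y) (by positivity)).const_sub
        (1 + m : ℝ)⁻¹
    · have : 0 < y := by linarith
      rw [norm_pow, Real.norm_of_nonneg (by positivity)]
      gcongr
  have hfeq : digamma =ᶠ[𝓝 x] fun y : ℝ => digamma 1 + ∑' m : ℕ, ((1 + m : ℝ)⁻¹ - (y + m)⁻¹) := by
    filter_upwards [Ioi_mem_nhds hx] with y (hy : 0 < y)
    rw [(hasSum_digamma_sub_digamma_one hy).tsum_eq]
    ring
  exact (hseries.const_add _).congr_of_eventuallyEq hfeq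

end Digamma

lemma StrictMonoOn.lt_of_le_of_tendsto {α β : Type*} [LinearOrder α] [NoMaxOrder α]
    [LinearOrder β] [TopologicalSpace β] [OrderClosedTopology β] {f g : α → β} {a x : α} {c : β}
    (hf : StrictMonoOn f (Ioi a)) (hfg : ∀ y, a < y → f y ≤ g y) (hg : Tendsto g atTop (𝓝 c))
    (hx : a < x) : f x < c := by
  have : Nonempty α := ⟨x⟩
  obtain ⟨x', hxx'⟩ := exists_gt x
  have hx' : a < x' := hx.trans hxx'
  refine (hf hx hx' hxx').trans_le (ge_of_tendsto hg ?_)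
  filter_upwards [eventually_ge_atTop x'] with y hy
  exact (hf.monotoneOn hx' (hx'.trans_le hy) hy).trans (hfg y (hx'.trans_le hy))

lemma hasDerivAt_hurwitzSum_two_mul_exp_digamma {x : ℝ} (hx : 0 < x) :
    HasDerivAt (fun y => hurwitzSum 2 y * exp (digamma y))
      ((hurwitzSum 2 x ^ 2 - 2 * hurwitzSum 3 x) * exp (digamma x)) x :=
  ((hasDerivAt_hurwitzSum le_rfl hx).mul (hasDerivAt_digamma hx).exp).congr_deriv (by
    push_cast
    ring)

lemma strictMonoOn_hurwitzSum_two_mul_exp_digamma :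
    StrictMonoOn (fun y => hurwitzSum 2 y * exp (digamma y)) (Ioi 0) := by
  refine strictMonoOn_of_deriv_pos (convex_Ioi 0)
    (fun y hy => (hasDerivAt_hurwitzSum_two_mul_exp_digamma hy).continuousAt.continuousWithinAt)
    fun y hy => ?_
  rw [interior_Ioi] at hy
  rw [(hasDerivAt_hurwitzSum_two_mul_exp_digamma hy).deriv]
  exact mul_pos (sub_pos.2 (two_mul_hurwitzSum_three_lt_sq hy)) (exp_pos _)

lemma hurwitzSum_two_mul_exp_digamma_le {x : ℝ} (hx : 0 < x) :
    hurwitzSum 2 x * exp (digamma x) ≤ 1 + x⁻¹ := by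
  have hexp : exp (digamma x) ≤ x := by
    simpa [exp_log hx] using exp_le_exp.2 (digamma_le_log hx)
  calc hurwitzSum 2 x * exp (digamma x) ≤ (x⁻¹ + x⁻¹ ^ 2) * x :=
        mul_le_mul (hurwitzSum_two_le hx) hexp (exp_pos _).le (by positivity)
    _ = 1 + x⁻¹ := by field_simp

theorem trigamma_mul_exp_digamma_lt_one (x : ℝ) (hx : 0 < x) :
    deriv digamma x * Real.exp (digamma x) < 1 := by
  rw [(hasDerivAt_digamma hx).deriv]
  have hlim : Tendsto (fun y : ℝ => 1 + y⁻¹) atTop (𝓝 1) := by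
    simpa using tendsto_inv_atTop_zero.const_add (1 : ℝ)
  exact strictMonoOn_hurwitzSum_two_mul_exp_digamma.lt_of_le_of_tendsto
    (fun _ hy => hurwitzSum_two_mul_exp_digamma_le hy) hlim hx
end

section
/- Let k be a nonnegative integer, θ > 0 a constant, and a > 0, b > 0 real numbers. Then the inequality Σ_{i=0}^{k} 1/((a+θ)^{i+1}(b+θ)^{k-i+1}) + Σ_{i=0}^{k} 1/(a^{i+1} b^{k-i+1}) > 2 Σ_{i=0}^{k} 1/((a+θ)^{i+1} b^{k-i+1}) holds if b - a > -θ, the reversed strict inequality holds if b - a < -θ, and equality holds if b = a - θ. -/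
/-! With `R(c) = 1 / (c - X) = ∑ₙ c⁻⁽ⁿ⁺¹⁾ Xⁿ` (`PowerSeries.invUnitsSub`), each sum in the statement
is the `Xᵏ`-coefficient of a product `R(c) R(d)`. Two applications of the resolvent identity
`R(u) - R(v) = (v - u) R(u) R(v)` turn the difference of the two sides into `θ (b + θ - a)` times
the `Xᵏ`-coefficient of `R(a) R(b) R(a + θ) R(b + θ)`, which is positive since all four series
have positive coefficients. -/

open Finset

namespace PowerSeries

theorem invUnitsSub_sub_invUnitsSub {R : Type*} [CommRing R] (u v : Rˣ) :
    invUnitsSub u - invUnitsSub v = C ((v : R) - u) * invUnitsSub u * invUnitsSub v := by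
  rw [map_sub]
  linear_combination invUnitsSub v * invUnitsSub_mul_sub u - invUnitsSub u * invUnitsSub_mul_sub v

theorem invUnitsSub_mul_sub_add_sub_mul {R : Type*} [CommRing R] (a b A B : Rˣ) {θ : R}
    (hA : (A : R) = a + θ) (hB : (B : R) = b + θ) :
    (invUnitsSub A * invUnitsSub B - invUnitsSub A * invUnitsSub b) +
        (invUnitsSub a * invUnitsSub b - invUnitsSub A * invUnitsSub b) =
      C (θ * ((B : R) - a)) *
        (invUnitsSub a * invUnitsSub b * invUnitsSub A * invUnitsSub B) := by
  have hBb := invUnitsSub_sub_invUnitsSub B b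
  have haA := invUnitsSub_sub_invUnitsSub a A
  have haB := invUnitsSub_sub_invUnitsSub a B
  rw [hA] at haA
  rw [hB] at hBb
  simp only [map_sub, map_add] at hBb haA haB
  rw [map_mul, map_sub]
  linear_combination
    invUnitsSub A * hBb + invUnitsSub b * haA + C θ * invUnitsSub A * invUnitsSub b * haB

theorem coeff_invUnitsSub_mk0_mul {K : Type*} [Field K] {c d : K} (hc : c ≠ 0) (hd : d ≠ 0)
    (k : ℕ) :
    coeff k (invUnitsSub (Units.mk0 c hc) * invUnitsSub (Units.mk0 d hd)) =
      ∑ i ∈ range (k + 1), 1 / (c ^ (i + 1) * d ^ (k - i + 1)) := by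
  rw [coeff_mul, Finset.Nat.sum_antidiagonal_eq_sum_range_succ (fun i j => coeff i _ * coeff j _)]
  refine sum_congr rfl fun i _ => ?_
  simp [coeff_invUnitsSub, mul_comm]

theorem coeff_mul_pos {R : Type*} [Semiring R] [PartialOrder R] [IsStrictOrderedRing R]
    {f g : R⟦X⟧} (hf : ∀ n, 0 < coeff n f) (hg : ∀ n, 0 < coeff n g) (n : ℕ) :
    0 < coeff n (f * g) := by
  rw [coeff_mul]
  exact sum_pos (fun p _ => mul_pos (hf p.1) (hg p.2)) ⟨(n, 0), by simp⟩

theorem coeff_invUnitsSub_pos {K : Type*} [Field K] [LinearOrder K] [IsStrictOrderedRing K]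
    {u : Kˣ} (hu : 0 < (u : K)) (n : ℕ) : 0 < coeff n (invUnitsSub u) := by
  rw [coeff_invUnitsSub, one_divp, Units.val_inv_eq_inv_val, Units.val_pow_eq_pow_val]
  positivity

end PowerSeries

open PowerSeries

theorem qi_sum_inequality (k : ℕ) (θ a b : ℝ) (hθ : 0 < θ) (ha : 0 < a) (hb : 0 < b) :
    (b - a > -θ →
      ∑ i ∈ Finset.range (k + 1), 1 / ((a + θ) ^ (i + 1) * (b + θ) ^ (k - i + 1)) +
          ∑ i ∈ Finset.range (k + 1), 1 / (a ^ (i + 1) * b ^ (k - i + 1)) >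
        2 * ∑ i ∈ Finset.range (k + 1), 1 / ((a + θ) ^ (i + 1) * b ^ (k - i + 1))) ∧
    (b - a < -θ →
      ∑ i ∈ Finset.range (k + 1), 1 / ((a + θ) ^ (i + 1) * (b + θ) ^ (k - i + 1)) +
          ∑ i ∈ Finset.range (k + 1), 1 / (a ^ (i + 1) * b ^ (k - i + 1)) <
        2 * ∑ i ∈ Finset.range (k + 1), 1 / ((a + θ) ^ (i + 1) * b ^ (k - i + 1))) ∧
    (b = a - θ →
      ∑ i ∈ Finset.range (k + 1), 1 / ((a + θ) ^ (i + 1) * (b + θ) ^ (k - i + 1)) +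
          ∑ i ∈ Finset.range (k + 1), 1 / (a ^ (i + 1) * b ^ (k - i + 1)) =
        2 * ∑ i ∈ Finset.range (k + 1), 1 / ((a + θ) ^ (i + 1) * b ^ (k - i + 1))) := by
  have hA : 0 < a + θ := by linarith
  have hB : 0 < b + θ := by linarith
  have key := congrArg (coeff k) <| invUnitsSub_mul_sub_add_sub_mul
    (Units.mk0 a ha.ne') (Units.mk0 b hb.ne') (Units.mk0 (a + θ) hA.ne') (Units.mk0 (b + θ) hB.ne')
    rfl rfl
  simp only [map_add, map_sub, coeff_C_mul, coeff_invUnitsSub_mk0_mul, Units.val_mk0] at key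
  have hpos {c : ℝ} (hc : 0 < c) : ∀ n, 0 < coeff n (invUnitsSub (Units.mk0 c hc.ne')) :=
    coeff_invUnitsSub_pos hc
  have hP := coeff_mul_pos (coeff_mul_pos (coeff_mul_pos (hpos ha) (hpos hb)) (hpos hA)) (hpos hB) k
  generalize coeff (R := ℝ) k _ = P at key hP
  refine ⟨fun h => ?_, fun h => ?_, fun h => ?_⟩
  · nlinarith [mul_pos (mul_pos hθ (by linarith : 0 < b + θ - a)) hP]
  · nlinarith [mul_pos (mul_pos hθ (by linarith : 0 < a - (b + θ))) hP]
  · rw [show b + θ - a = 0 by linarith, mul_zero, zero_mul] at key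
    linarith
end
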